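/- arXiv:1902.01265 — 7 statements merged into one kernel-verified Lean document; each statement's English description precedes it below -/
import Mathlib

section
/- For a sequence of n ≥ 3 i.i.d. Bernoulli(p) trials with 0 < p < 1 and streak length k with 1 ≤ k ≤ n−2, the expected proportion of successes among trials that immediately follow k consecutive successes, conditional on at least one such trial existing, is strictly less than p. -/
open Finset

/-- Probability weight of a Bernoulli(p) binary sequence. -/
def wgt {n : ℕ} (p : ℝ) (x : Fin n → Bool) : ℝ :=
  ∏ i, if x i then p else 1 - p

/-- The set of trials that immediately follow `k` consecutive successes. -/
def streakSet {n : ℕ} (k : ℕ) (x : Fin n → Bool) : Finset (Fin n) :=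
  Finset.univ.filter (fun i : Fin n =>
    k ≤ i.val ∧ ∀ j : Fin n, i.val - k ≤ j.val → j.val < i.val → x j = true)

/-- The proportion of successes on the trials that immediately follow `k`
consecutive successes. -/
noncomputable def phat {n : ℕ} (k : ℕ) (x : Fin n → Bool) : ℝ :=
  (∑ i ∈ streakSet k x, if x i then (1:ℝ) else 0) / ((streakSet k x).card : ℝ)

/-- Number of successes in the sequence. -/
def ones {n : ℕ} (x : Fin n → Bool) : ℕ :=
  (Finset.univ.filter (fun i => x i = true)).card

/-!
Write `E[(P̂ - p) · 1{I ≠ ∅}]` as the sum, over trials `i` and sequences `x` with `i ∈ I(x)`,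
of `w(x) (xᵢ - p) / |I(x)|`. Whether `i ∈ I(x)` depends only on the trials before `i`, so for
fixed `i` we may pair each `x` with `xᵢ = 0` with the sequence `x'` in which `xᵢ = 1`. Since
`w(x) p = w(x') (1 - p)`, the pair contributes `w(x) p (1/|I(x')| - 1/|I(x)|)`, which is `≤ 0`
because an extra success only creates streaks: `I(x) ⊆ I(x')`. For `i = k` and `x` with
successes everywhere except at trial `k`, trial `k + 1` lies in `I(x') \ I(x)`, so that pair is
strictly negative.
-/

open Function

section Streaks

variable {n k : ℕ}

@[simp]
lemma mem_streakSet {x : Fin n → Bool} {i : Fin n} :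
    i ∈ streakSet k x ↔
      k ≤ i.val ∧ ∀ j : Fin n, i.val - k ≤ j.val → j.val < i.val → x j = true := by
  simp [streakSet]

lemma streakSet_mono {x y : Fin n → Bool} (hxy : x ≤ y) : streakSet k x ⊆ streakSet k y := by
  intro i hi
  rw [mem_streakSet] at hi ⊢
  exact ⟨hi.1, fun j hj₁ hj₂ => Bool.eq_true_of_true_le (hi.2 j hj₁ hj₂ ▸ hxy j)⟩

lemma mem_streakSet_congr {x y : Fin n → Bool} {i : Fin n} (h : ∀ j < i, x j = y j) :
    i ∈ streakSet k x ↔ i ∈ streakSet k y := by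
  simp only [mem_streakSet]
  refine and_congr_right fun _ => forall_congr' fun j => imp_congr_right fun _ => ?_
  exact imp_congr_right fun hj => by rw [h j hj]

lemma mem_streakSet_update_self {x : Fin n → Bool} {i : Fin n} {b : Bool} :
    i ∈ streakSet k (update x i b) ↔ i ∈ streakSet k x :=
  mem_streakSet_congr fun _ hj => update_of_ne hj.ne _ _

end Streaks

section Weight

variable {n : ℕ} {p : ℝ}

lemma wgt_pos (hp : 0 < p) (hp1 : p < 1) (x : Fin n → Bool) : 0 < wgt p x :=
  prod_pos fun j _ => by cases x j <;> simp <;> linarith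

lemma wgt_update_false_mul (x : Fin n → Bool) (i : Fin n) :
    wgt p (update x i false) * p = wgt p (update x i true) * (1 - p) := by
  simp only [wgt, apply_update (fun _ b => if b = true then p else 1 - p),
    prod_update_of_mem (mem_univ i), Bool.false_eq_true, if_true, if_false]
  ring

end Weight

lemma Fintype.sum_eq_sum_filter_false_add_update_true {ι M : Type*} [Fintype ι]
    [DecidableEq ι] [AddCommMonoid M] (f : (ι → Bool) → M) (i : ι) :
    ∑ x, f x = ∑ x with x i = false, (f x + f (update x i true)) := by
  rw [sum_add_distrib, ← sum_filter_add_sum_filter_not univ (fun x => x i = false)]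
  congr 1
  refine sum_nbij' (update · i false) (update · i true) ?_ ?_ ?_ ?_ ?_ <;> intro x hx
  all_goals simp_all
  rw [← hx, update_eq_self]

section Bias

variable {n k : ℕ} {p : ℝ}

noncomputable def biasTerm (p : ℝ) (k : ℕ) (x : Fin n → Bool) (i : Fin n) : ℝ :=
  if i ∈ streakSet k x then wgt p x * ((if x i then 1 else 0) - p) / #(streakSet k x) else 0

lemma sum_biasTerm (x : Fin n → Bool) :
    ∑ i, biasTerm p k x i =
      (if (streakSet k x).Nonempty then wgt p x * phat k x else 0) -
        p * (if (streakSet k x).Nonempty then wgt p x else 0) := by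
  simp only [biasTerm]
  rw [sum_ite_mem, univ_inter]
  obtain h | h := (streakSet k x).eq_empty_or_nonempty
  · simp [h]
  · have hcard : (#(streakSet k x) : ℝ) ≠ 0 := by positivity
    rw [if_pos h, if_pos h, phat, ← sum_div, ← mul_sum, sum_sub_distrib, sum_const,
      nsmul_eq_mul]
    field_simp

lemma biasTerm_add_update_true {x : Fin n → Bool} {i : Fin n} (hxi : x i = false)
    (hi : i ∈ streakSet k x) :
    biasTerm p k x i + biasTerm p k (update x i true) i =
      wgt p x * p *
        ((#(streakSet k (update x i true)) : ℝ)⁻¹ - (#(streakSet k x) : ℝ)⁻¹) := by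
  have hw := wgt_update_false_mul (p := p) x i
  rw [← hxi, update_eq_self] at hw
  simp only [biasTerm, mem_streakSet_update_self, if_pos hi, hxi, update_self,
    Bool.false_eq_true, if_false, if_true]
  linear_combination (-(#(streakSet k (update x i true)) : ℝ)⁻¹) * hw

lemma biasTerm_add_update_true_nonpos (hp : 0 < p) (hp1 : p < 1) {x : Fin n → Bool}
    {i : Fin n} (hxi : x i = false) :
    biasTerm p k x i + biasTerm p k (update x i true) i ≤ 0 := by
  by_cases hi : i ∈ streakSet k x
  · rw [biasTerm_add_update_true hxi hi]
    refine mul_nonpos_of_nonneg_of_nonpos (by have := wgt_pos hp hp1 x; positivity) ?_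
    refine sub_nonpos.2 (inv_anti₀ (by simpa using ⟨i, hi⟩) ?_)
    exact_mod_cast card_le_card (streakSet_mono (le_update_self_iff.2 le_top))
  · simp only [biasTerm, mem_streakSet_update_self, if_neg hi, add_zero, le_refl]

lemma sum_biasTerm_nonpos (hp : 0 < p) (hp1 : p < 1) (i : Fin n) :
    ∑ x, biasTerm p k x i ≤ 0 := by
  rw [Fintype.sum_eq_sum_filter_false_add_update_true _ i]
  exact sum_nonpos fun x hx => biasTerm_add_update_true_nonpos hp hp1 (mem_filter.1 hx).2

lemma exists_sum_biasTerm_neg (hp : 0 < p) (hp1 : p < 1) (hk : 1 ≤ k) (hkn : k + 1 < n) :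
    ∃ i : Fin n, ∑ x, biasTerm p k x i < 0 := by
  set i : Fin n := ⟨k, Nat.lt_of_succ_lt hkn⟩
  refine ⟨i, ?_⟩
  set x : Fin n → Bool := update (fun _ => true) i false
  have hxi : x i = false := by simp [x]
  have hi : i ∈ streakSet k x := by
    simp only [mem_streakSet, x]
    exact ⟨le_rfl, fun j _ hj => update_of_ne (Fin.ne_of_lt hj) _ _⟩
  have hnext : (⟨k + 1, hkn⟩ : Fin n) ∉ streakSet k x := fun h => by
    simpa [hxi] using (mem_streakSet.1 h).2 i (by simp [i]; omega) (by simp [i])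
  have hlt : streakSet k x ⊂ streakSet k (update x i true) := by
    refine (ssubset_iff_of_subset (streakSet_mono (le_update_self_iff.2 le_top))).2
      ⟨⟨k + 1, hkn⟩, ?_, hnext⟩
    simp [x]
  rw [Fintype.sum_eq_sum_filter_false_add_update_true _ i]
  refine sum_neg' (fun y hy => biasTerm_add_update_true_nonpos hp hp1 (mem_filter.1 hy).2)
    ⟨x, mem_filter.2 ⟨mem_univ x, hxi⟩, ?_⟩
  rw [biasTerm_add_update_true hxi hi]
  refine mul_neg_of_pos_of_neg (mul_pos (wgt_pos hp hp1 x) hp) (sub_neg.2 ?_)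
  exact inv_strictAnti₀ (by simpa using ⟨i, hi⟩) (by exact_mod_cast card_lt_card hlt)

end Bias

theorem stmt1_general (n k : ℕ) (hk : 1 ≤ k) (hk2 : k ≤ n - 2)
    (p : ℝ) (hp : 0 < p) (hp1 : p < 1) :
    (∑ x : Fin n → Bool, if (streakSet k x).Nonempty then wgt p x * phat k x else 0) /
    (∑ x : Fin n → Bool, if (streakSet k x).Nonempty then wgt p x else 0) < p := by
  have hkn : k + 1 < n := by omega
  have hden : 0 < ∑ x : Fin n → Bool, if (streakSet k x).Nonempty then wgt p x else 0 := by
    have hall : (streakSet k fun _ : Fin n => true).Nonempty := ⟨⟨k, by omega⟩, by simp⟩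
    refine sum_pos' (fun x _ => ?_) ⟨fun _ => true, mem_univ _, ?_⟩
    · split_ifs
      exacts [(wgt_pos hp hp1 x).le, le_rfl]
    · rw [if_pos hall]
      exact wgt_pos hp hp1 _
  rw [div_lt_iff₀ hden, ← sub_neg, mul_sum, ← sum_sub_distrib]
  simp_rw [← sum_biasTerm]
  rw [sum_comm]
  obtain ⟨i, hi⟩ := exists_sum_biasTerm_neg hp hp1 hk hkn
  exact sum_neg' (fun i _ => sum_biasTerm_nonpos hp hp1 i) ⟨i, mem_univ i, hi⟩

/-- Streak selection bias: the conditionally expected proportion of successes on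
trials immediately following k consecutive successes is strictly less than p. -/
theorem stmt1 (n k : ℕ) (hn : 3 ≤ n) (hk : 1 ≤ k) (hk2 : k ≤ n - 2)
    (p : ℝ) (hp : 0 < p) (hp1 : p < 1) :
    (∑ x : Fin n → Bool, if (streakSet k x).Nonempty then wgt p x * phat k x else 0) /
    (∑ x : Fin n → Bool, if (streakSet k x).Nonempty then wgt p x else 0) < p :=
  stmt1_general n k hk hk2 p hp hp1
end

section
/- Conditional on the sequence containing exactly n1 successes and on at least one of the first n−1 trials being a success, the expected proportion of successes among trials immediately following a success equals (n1−1)/(n−1) (the sampling-without-replacement formula). -/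
open Finset

-- successor with wraparound
def nxt {n : ℕ} (i : Fin n) : Fin n :=
  ⟨(i.val + 1) % n, Nat.mod_lt _ (Nat.lt_of_le_of_lt (Nat.zero_le _) i.isLt)⟩

lemma nxt_val {n : ℕ} {i : Fin n} (h : i.val < n - 1) : (nxt i).val = i.val + 1 := by
  simp only [nxt]
  exact Nat.mod_eq_of_lt (by omega)

lemma mem_streak1 {n : ℕ} {x : Fin n → Bool} {i : Fin n} :
    i ∈ streakSet 1 x ↔ ∃ j : Fin n, j.val < n - 1 ∧ x j = true ∧ i = nxt j := by
  simp only [streakSet, mem_filter, mem_univ, true_and]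
  constructor
  · rintro ⟨h1, h2⟩
    have hn : 0 < n := Nat.lt_of_le_of_lt (Nat.zero_le _) i.isLt
    have hi : i.val - 1 < n := by omega
    refine ⟨⟨i.val - 1, hi⟩, ?_, ?_, ?_⟩
    · show i.val - 1 < n - 1; omega
    · exact h2 ⟨i.val - 1, hi⟩ (le_refl _) (by show i.val - 1 < i.val; omega)
    · apply Fin.ext
      rw [nxt_val (show i.val - 1 < n - 1 by omega)]
      show i.val = i.val - 1 + 1; omega
  · rintro ⟨j, hj, hxj, rfl⟩
    have hv : (nxt j).val = j.val + 1 := nxt_val hj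
    refine ⟨by omega, ?_⟩
    intro j' h1 h2
    rw [hv] at h1 h2
    have : j' = j := by apply Fin.ext; omega
    rwa [this]

lemma nxt_inj {n : ℕ} {i j : Fin n} (hi : i.val < n - 1) (hj : j.val < n - 1)
    (h : nxt i = nxt j) : i = j := by
  apply Fin.ext
  have := congrArg Fin.val h
  rw [nxt_val hi, nxt_val hj] at this
  omega

lemma streak1_card {n : ℕ} (x : Fin n → Bool) :
    (streakSet 1 x).card
      = (univ.filter (fun j : Fin n => j.val < n - 1 ∧ x j = true)).card := by
  refine (Finset.card_bij (fun j _ => nxt j) ?_ ?_ ?_).symm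
  · intro a ha
    simp only [mem_filter, mem_univ, true_and] at ha
    exact mem_streak1.2 ⟨a, ha.1, ha.2, rfl⟩
  · intro a ha b hb h
    simp only [mem_filter, mem_univ, true_and] at ha hb
    exact nxt_inj ha.1 hb.1 h
  · intro b hb
    rw [mem_streak1] at hb
    obtain ⟨j, hj, hxj, rfl⟩ := hb
    exact ⟨j, by simp [mem_filter, hj, hxj], rfl⟩

lemma streak1_filter_card {n : ℕ} (x : Fin n → Bool) :
    ((streakSet 1 x).filter (fun i => x i = true)).card
      = (univ.filter (fun j : Fin n => j.val < n - 1 ∧ x j = true ∧ x (nxt j) = true)).card := by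
  refine (Finset.card_bij (fun j _ => nxt j) ?_ ?_ ?_).symm
  · intro a ha
    simp only [mem_filter, mem_univ, true_and] at ha
    exact mem_filter.2 ⟨mem_streak1.2 ⟨a, ha.1, ha.2.1, rfl⟩, ha.2.2⟩
  · intro a ha b hb h
    simp only [mem_filter, mem_univ, true_and] at ha hb
    exact nxt_inj ha.1 hb.1 h
  · intro b hb
    simp only [mem_filter] at hb
    obtain ⟨hb1, hb2⟩ := hb
    rw [mem_streak1] at hb1
    obtain ⟨j, hj, hxj, rfl⟩ := hb1
    exact ⟨j, by simp [mem_filter, hj, hxj, hb2], rfl⟩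

def lst (n : ℕ) [NeZero n] : Fin n := ⟨n - 1, Nat.sub_lt (Nat.pos_of_ne_zero (NeZero.ne n)) one_pos⟩

lemma lst_val (n : ℕ) [NeZero n] : (lst n).val = n - 1 := rfl

lemma lt_iff_ne_lst {n : ℕ} [NeZero n] (j : Fin n) : j.val < n - 1 ↔ j ≠ lst n := by
  have := j.isLt
  constructor
  · intro h hj; rw [hj, lst_val] at h; omega
  · intro h
    have : j.val ≠ n - 1 := fun hv => h (Fin.ext (by rw [hv, lst_val]))
    omega

lemma filter_lt_eq_erase {n : ℕ} [NeZero n] (x : Fin n → Bool) :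
    (univ.filter (fun j : Fin n => j.val < n - 1 ∧ x j = true))
      = (univ.filter (fun j : Fin n => x j = true)).erase (lst n) := by
  ext j
  simp only [mem_filter, mem_erase, mem_univ, true_and, lt_iff_ne_lst]

lemma streak1_card' {n : ℕ} [NeZero n] (x : Fin n → Bool) :
    (streakSet 1 x).card = ones x - (if x (lst n) = true then 1 else 0) := by
  rw [streak1_card, filter_lt_eq_erase, ones]
  by_cases h : x (lst n) = true
  · rw [Finset.card_erase_of_mem (by simp [h]), if_pos h]
  · rw [Finset.erase_eq_of_notMem (by simp [h]), if_neg h]; omega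

lemma streak1_nonempty {n : ℕ} [NeZero n] {x : Fin n → Bool} (h : 2 ≤ ones x) :
    (streakSet 1 x).Nonempty := by
  rw [← Finset.card_pos, streak1_card']
  have : (if x (lst n) = true then 1 else 0) ≤ 1 := by split <;> omega
  omega

lemma wgt_eq {n : ℕ} (p : ℝ) (x : Fin n → Bool) :
    wgt p x = p ^ ones x * (1 - p) ^ (n - ones x) := by
  rw [wgt, ← Finset.prod_filter_mul_prod_filter_not univ (fun i => x i = true)]
  have h1 : ∀ i ∈ univ.filter (fun i => x i = true), (if x i then p else 1 - p) = p := by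
    intro i hi; simp only [mem_filter] at hi; simp [hi.2]
  have h2 : ∀ i ∈ univ.filter (fun i => ¬ x i = true), (if x i then p else 1 - p) = 1 - p := by
    intro i hi; simp only [mem_filter] at hi; simp [hi.2]
  rw [Finset.prod_congr rfl h1, Finset.prod_congr rfl h2, Finset.prod_const, Finset.prod_const]
  have := Finset.card_filter_add_card_filter_not (s := (univ : Finset (Fin n)))
    (p := fun i => x i = true)
  simp only [Finset.card_univ, Fintype.card_fin] at this
  simp only [ones]
  congr 2
  omega

lemma univ_filter_decide_mem {n : ℕ} (u : Finset (Fin n)) :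
    (univ.filter (fun i => (decide (i ∈ u)) = true)) = u := by
  ext i; simp

lemma count_supersets {n n1 : ℕ} (s t : Finset (Fin n)) (hst : Disjoint s t) (hs : s.card ≤ n1) :
    ((univ : Finset (Fin n → Bool)).filter
        (fun x => ones x = n1 ∧ (∀ i ∈ s, x i = true) ∧ (∀ i ∈ t, x i = false))).card
      = (n - s.card - t.card).choose (n1 - s.card) := by
  have hts : t ⊆ univ \ s := by
    intro i hi
    simp only [mem_sdiff, mem_univ, true_and]
    exact fun h => (Finset.disjoint_left.1 hst h) hi
  have hcard : ((univ \ s) \ t).card = n - s.card - t.card := by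
    rw [Finset.card_sdiff_of_subset hts, Finset.card_sdiff_of_subset (Finset.subset_univ s)]
    simp
  rw [← hcard, ← Finset.card_powersetCard (n1 - s.card) ((univ \ s) \ t)]
  apply Finset.card_bij' (i := fun x _ => (univ.filter (fun i => x i = true)) \ s)
    (j := fun v _ => (fun i => decide (i ∈ v ∪ s)))
  · intro x hx
    simp only [mem_filter, mem_univ, true_and] at hx
    obtain ⟨h1, h2, h3⟩ := hx
    have hsub : s ⊆ univ.filter (fun i => x i = true) := by
      intro i hi; simp [h2 i hi]
    rw [Finset.mem_powersetCard]
    constructor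
    · intro i hi
      rw [mem_sdiff, mem_filter] at hi
      rw [mem_sdiff, mem_sdiff]
      refine ⟨⟨mem_univ i, hi.2⟩, fun hit => ?_⟩
      have h4 := h3 i hit
      rw [h4] at hi
      simp at hi
    · simp only [ones] at h1
      rw [Finset.card_sdiff_of_subset hsub, h1]
  · intro v hv
    rw [Finset.mem_powersetCard] at hv
    obtain ⟨hsub, hcardv⟩ := hv
    have hvs : Disjoint v s := by
      rw [Finset.disjoint_left]
      intro i hi his
      have h5 := hsub hi
      rw [mem_sdiff, mem_sdiff] at h5
      exact h5.1.2 his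
    have hvt : Disjoint v t := by
      rw [Finset.disjoint_left]
      intro i hi hit
      have h5 := hsub hi
      rw [mem_sdiff] at h5
      exact h5.2 hit
    simp only [mem_filter, mem_univ, true_and]
    refine ⟨?_, ?_, ?_⟩
    · rw [ones.eq_1, univ_filter_decide_mem, Finset.card_union_of_disjoint hvs, hcardv]
      omega
    · intro i hi; simp [Finset.mem_union, hi]
    · intro i hi
      simp only [decide_eq_false_iff_not, Finset.mem_union]
      rintro (h | h)
      · exact (Finset.disjoint_left.1 hvt h) hi
      · exact (Finset.disjoint_left.1 hst h) hi
  · intro x hx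
    simp only [mem_filter, mem_univ, true_and] at hx
    have hsub : s ⊆ univ.filter (fun i => x i = true) := by
      intro i hi; simp [hx.2.1 i hi]
    funext i
    rw [Finset.sdiff_union_of_subset hsub]
    by_cases h : x i = true <;> simp [h]
  · intro v hv
    rw [Finset.mem_powersetCard] at hv
    have hvs : Disjoint v s := by
      rw [Finset.disjoint_left]
      intro i hi his
      have h5 := hv.1 hi
      rw [mem_sdiff, mem_sdiff] at h5
      exact h5.1.2 his
    rw [univ_filter_decide_mem, Finset.union_sdiff_cancel_right hvs]

lemma count_zero {n n1 : ℕ} (s t : Finset (Fin n)) (hs : n1 < s.card) :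
    ((univ : Finset (Fin n → Bool)).filter
        (fun x => ones x = n1 ∧ (∀ i ∈ s, x i = true) ∧ (∀ i ∈ t, x i = false))).card = 0 := by
  rw [Finset.card_eq_zero, Finset.filter_eq_empty_iff]
  rintro x - ⟨h1, h2, -⟩
  have hsub : s ⊆ univ.filter (fun i => x i = true) := by
    intro i hi; simp [h2 i hi]
  have := Finset.card_le_card hsub
  simp only [ones] at h1
  omega

lemma card_filter_val_lt {n m : ℕ} (h : m ≤ n) :
    (univ.filter (fun j : Fin n => j.val < m)).card = m := by
  rcases eq_or_lt_of_le h with rfl | hlt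
  · rw [Finset.filter_true_of_mem (fun j _ => j.isLt)]
    simp
  · have : (univ.filter (fun j : Fin n => j.val < m)) = Finset.Iio ⟨m, hlt⟩ := by
      ext j
      simp [Finset.mem_Iio, Fin.lt_def]
    rw [this, Fin.card_Iio]

lemma cardA {n n1 : ℕ} [NeZero n] (hn : 1 < n) (h1 : 2 ≤ n1) {j : Fin n} (hj : j.val < n - 1) :
    (univ.filter (fun x : Fin n → Bool =>
        ones x = n1 ∧ x (lst n) = true ∧ x j = true ∧ x (nxt j) = true)).card
      = if j.val = n - 2 then (n-2).choose (n1-2)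
        else (if 3 ≤ n1 then (n-3).choose (n1-3) else 0) := by
  have hjl : j ≠ lst n := (lt_iff_ne_lst j).1 hj
  by_cases hc : j.val = n - 2
  · have hnx : nxt j = lst n := by
      apply Fin.ext; rw [nxt_val hj, lst_val]; omega
    have hpred : ∀ x ∈ (univ : Finset (Fin n → Bool)),
        ((ones x = n1 ∧ x (lst n) = true ∧ x j = true ∧ x (nxt j) = true) ↔
         (ones x = n1 ∧ (∀ i ∈ ({j, lst n} : Finset (Fin n)), x i = true) ∧
            (∀ i ∈ (∅ : Finset (Fin n)), x i = false))) := by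
      intro x _
      simp [hnx]
      try tauto
    rw [Finset.filter_congr hpred, count_supersets _ _ (Finset.disjoint_empty_right _)
      (by rw [Finset.card_pair hjl]; omega)]
    rw [Finset.card_pair hjl, Finset.card_empty, if_pos hc]
    norm_num
  · have hnxv : (nxt j).val = j.val + 1 := nxt_val hj
    have hnxl : nxt j ≠ lst n := by
      intro h; have := congrArg Fin.val h; rw [hnxv, lst_val] at this; omega
    have hjn : j ≠ nxt j := by
      intro h; have := congrArg Fin.val h; rw [hnxv] at this; omega
    have hcard : ({j, nxt j, lst n} : Finset (Fin n)).card = 3 := by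
      rw [Finset.card_insert_of_notMem (by simp [hjn, hjl]),
        Finset.card_insert_of_notMem (by simp [hnxl]), Finset.card_singleton]
    have hpred : ∀ x ∈ (univ : Finset (Fin n → Bool)),
        ((ones x = n1 ∧ x (lst n) = true ∧ x j = true ∧ x (nxt j) = true) ↔
         (ones x = n1 ∧ (∀ i ∈ ({j, nxt j, lst n} : Finset (Fin n)), x i = true) ∧
            (∀ i ∈ (∅ : Finset (Fin n)), x i = false))) := by
      intro x _
      simp
      try tauto
    rw [Finset.filter_congr hpred]
    by_cases h3 : 3 ≤ n1
    · rw [count_supersets _ _ (Finset.disjoint_empty_right _) (by rw [hcard]; omega)]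
      rw [hcard, Finset.card_empty, if_neg hc, if_pos h3]
      norm_num
    · rw [count_zero _ _ (by rw [hcard]; omega), if_neg hc, if_neg h3]

lemma cardB {n n1 : ℕ} [NeZero n] (hn : 1 < n) (h1 : 2 ≤ n1) {j : Fin n} (hj : j.val < n - 1) :
    (univ.filter (fun x : Fin n → Bool =>
        ones x = n1 ∧ x (lst n) = false ∧ x j = true ∧ x (nxt j) = true)).card
      = if j.val = n - 2 then 0 else (n-3).choose (n1-2) := by
  have hjl : j ≠ lst n := (lt_iff_ne_lst j).1 hj
  by_cases hc : j.val = n - 2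
  · have hnx : nxt j = lst n := by
      apply Fin.ext; rw [nxt_val hj, lst_val]; omega
    rw [if_pos hc, Finset.card_eq_zero, Finset.filter_eq_empty_iff]
    rintro x - ⟨-, h2, -, h4⟩
    rw [hnx, h2] at h4
    exact Bool.false_ne_true h4
  · have hnxv : (nxt j).val = j.val + 1 := nxt_val hj
    have hnxl : nxt j ≠ lst n := by
      intro h; have := congrArg Fin.val h; rw [hnxv, lst_val] at this; omega
    have hjn : j ≠ nxt j := by
      intro h; have := congrArg Fin.val h; rw [hnxv] at this; omega
    have hcard : ({j, nxt j} : Finset (Fin n)).card = 2 := Finset.card_pair hjn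
    have hdisj : Disjoint ({j, nxt j} : Finset (Fin n)) ({lst n} : Finset (Fin n)) := by
      simp [Finset.disjoint_left, hjl, hnxl]
    have hpred : ∀ x ∈ (univ : Finset (Fin n → Bool)),
        ((ones x = n1 ∧ x (lst n) = false ∧ x j = true ∧ x (nxt j) = true) ↔
         (ones x = n1 ∧ (∀ i ∈ ({j, nxt j} : Finset (Fin n)), x i = true) ∧
            (∀ i ∈ ({lst n} : Finset (Fin n)), x i = false))) := by
      intro x _
      simp
      try tauto
    rw [Finset.filter_congr hpred, count_supersets _ _ hdisj (by rw [hcard]; omega)]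
    rw [hcard, Finset.card_singleton, if_neg hc]
    have : n - 2 - 1 = n - 3 := by omega
    rw [this]

lemma sum_R_gen {n n1 : ℕ} [NeZero n] (hn : 1 < n) (h1 : 2 ≤ n1) (b : Bool) :
    (∑ x ∈ univ.filter (fun x : Fin n → Bool => ones x = n1 ∧ x (lst n) = b),
        ((streakSet 1 x).filter (fun i => x i = true)).card)
      = ∑ j ∈ univ.filter (fun j : Fin n => j.val < n - 1),
          (univ.filter (fun x : Fin n → Bool =>
            ones x = n1 ∧ x (lst n) = b ∧ x j = true ∧ x (nxt j) = true)).card := by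
  have step1 : ∀ x : Fin n → Bool,
      ((streakSet 1 x).filter (fun i => x i = true)).card
        = ∑ j ∈ univ.filter (fun j : Fin n => j.val < n - 1),
            (if x j = true ∧ x (nxt j) = true then 1 else 0) := by
    intro x
    rw [streak1_filter_card]
    rw [Finset.card_filter]
    rw [← Finset.sum_filter_add_sum_filter_not univ (fun j : Fin n => j.val < n - 1)]
    have hz : ∑ j ∈ univ.filter (fun j : Fin n => ¬ j.val < n - 1),
        (if j.val < n - 1 ∧ x j = true ∧ x (nxt j) = true then 1 else 0) = 0 := by
      apply Finset.sum_eq_zero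
      intro j hj
      simp only [mem_filter] at hj
      rw [if_neg (fun h => hj.2 h.1)]
    rw [hz, add_zero]
    apply Finset.sum_congr rfl
    intro j hj
    simp only [mem_filter] at hj
    by_cases h : x j = true ∧ x (nxt j) = true
    · rw [if_pos ⟨hj.2, h.1, h.2⟩, if_pos h]
    · rw [if_neg (fun hh => h ⟨hh.2.1, hh.2.2⟩), if_neg h]
  simp_rw [step1]
  rw [Finset.sum_comm]
  apply Finset.sum_congr rfl
  intro j hj
  rw [Finset.card_filter]
  rw [Finset.sum_filter]
  apply Finset.sum_congr rfl
  intro x _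
  by_cases h1x : ones x = n1 ∧ x (lst n) = b
  · rw [if_pos h1x]
    by_cases h2x : x j = true ∧ x (nxt j) = true
    · rw [if_pos h2x, if_pos ⟨h1x.1, h1x.2, h2x.1, h2x.2⟩]
    · rw [if_neg h2x, if_neg (fun hh => h2x ⟨hh.2.2.1, hh.2.2.2⟩)]
  · rw [if_neg h1x, if_neg (fun hh => h1x ⟨hh.1, hh.2.1⟩)]

lemma filter_eq_singleton_n2 {n : ℕ} (hn : 1 < n) :
    (univ.filter (fun j : Fin n => j.val < n - 1)).filter (fun j => j.val = n - 2)
      = {(⟨n - 2, by omega⟩ : Fin n)} := by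
  ext j
  simp only [Finset.filter_filter, mem_filter, mem_univ, true_and, Finset.mem_singleton]
  constructor
  · rintro ⟨-, h⟩; exact Fin.ext h
  · rintro rfl; exact ⟨by show n - 2 < n - 1; omega, rfl⟩

lemma filter_ne_n2 {n : ℕ} (hn : 1 < n) :
    (univ.filter (fun j : Fin n => j.val < n - 1)).filter (fun j => ¬ j.val = n - 2)
      = univ.filter (fun j : Fin n => j.val < n - 2) := by
  ext j
  simp only [Finset.filter_filter, mem_filter, mem_univ, true_and]
  omega

lemma SA_eq {n n1 : ℕ} [NeZero n] (hn : 1 < n) (h1 : 2 ≤ n1) :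
    (∑ x ∈ univ.filter (fun x : Fin n → Bool => ones x = n1 ∧ x (lst n) = true),
        ((streakSet 1 x).filter (fun i => x i = true)).card)
      = (n-2).choose (n1-2) + (n-2) * (if 3 ≤ n1 then (n-3).choose (n1-3) else 0) := by
  rw [sum_R_gen hn h1 true]
  have hval : ∀ j ∈ univ.filter (fun j : Fin n => j.val < n - 1),
      (univ.filter (fun x : Fin n → Bool =>
        ones x = n1 ∧ x (lst n) = true ∧ x j = true ∧ x (nxt j) = true)).card
      = if j.val = n - 2 then (n-2).choose (n1-2)
        else (if 3 ≤ n1 then (n-3).choose (n1-3) else 0) := by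
    intro j hj
    simp only [mem_filter] at hj
    exact cardA hn h1 hj.2
  rw [Finset.sum_congr rfl hval]
  rw [← Finset.sum_filter_add_sum_filter_not _ (fun j : Fin n => j.val = n - 2)]
  have e1 : ∑ j ∈ (univ.filter (fun j : Fin n => j.val < n - 1)).filter (fun j => j.val = n - 2),
      (if j.val = n - 2 then (n-2).choose (n1-2) else (if 3 ≤ n1 then (n-3).choose (n1-3) else 0))
      = (n-2).choose (n1-2) := by
    rw [filter_eq_singleton_n2 hn, Finset.sum_singleton, if_pos rfl]
  have e2 : ∑ j ∈ (univ.filter (fun j : Fin n => j.val < n - 1)).filter (fun j => ¬ j.val = n - 2),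
      (if j.val = n - 2 then (n-2).choose (n1-2) else (if 3 ≤ n1 then (n-3).choose (n1-3) else 0))
      = (n-2) * (if 3 ≤ n1 then (n-3).choose (n1-3) else 0) := by
    rw [filter_ne_n2 hn]
    rw [Finset.sum_congr rfl (fun j hj => ?_), Finset.sum_const,
      card_filter_val_lt (show n - 2 ≤ n by omega), smul_eq_mul]
    simp only [mem_filter] at hj
    rw [if_neg (by omega)]
  rw [e1, e2]

lemma SB_eq {n n1 : ℕ} [NeZero n] (hn : 1 < n) (h1 : 2 ≤ n1) :
    (∑ x ∈ univ.filter (fun x : Fin n → Bool => ones x = n1 ∧ x (lst n) = false),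
        ((streakSet 1 x).filter (fun i => x i = true)).card)
      = (n-2) * (n-3).choose (n1-2) := by
  rw [sum_R_gen hn h1 false]
  have hval : ∀ j ∈ univ.filter (fun j : Fin n => j.val < n - 1),
      (univ.filter (fun x : Fin n → Bool =>
        ones x = n1 ∧ x (lst n) = false ∧ x j = true ∧ x (nxt j) = true)).card
      = if j.val = n - 2 then 0 else (n-3).choose (n1-2) := by
    intro j hj
    simp only [mem_filter] at hj
    exact cardB hn h1 hj.2
  rw [Finset.sum_congr rfl hval]
  rw [← Finset.sum_filter_add_sum_filter_not _ (fun j : Fin n => j.val = n - 2)]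
  have e1 : ∑ j ∈ (univ.filter (fun j : Fin n => j.val < n - 1)).filter (fun j => j.val = n - 2),
      (if j.val = n - 2 then 0 else (n-3).choose (n1-2)) = 0 := by
    rw [filter_eq_singleton_n2 hn, Finset.sum_singleton, if_pos rfl]
  have e2 : ∑ j ∈ (univ.filter (fun j : Fin n => j.val < n - 1)).filter (fun j => ¬ j.val = n - 2),
      (if j.val = n - 2 then 0 else (n-3).choose (n1-2)) = (n-2) * (n-3).choose (n1-2) := by
    rw [filter_ne_n2 hn]
    rw [Finset.sum_congr rfl (fun j hj => ?_), Finset.sum_const,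
      card_filter_val_lt (show n - 2 ≤ n by omega), smul_eq_mul]
    simp only [mem_filter] at hj
    rw [if_neg (by omega)]
  rw [e1, e2, zero_add]

lemma fact_ne {m : ℕ} : ((Nat.factorial m : ℕ) : ℝ) ≠ 0 := by
  exact_mod_cast Nat.factorial_ne_zero m

lemma arith {n n1 : ℕ} (h1 : 2 ≤ n1) (h2 : n1 ≤ n) :
    (((n-2).choose (n1-2) + (n-2) * (if 3 ≤ n1 then (n-3).choose (n1-3) else 0) : ℕ) : ℝ)
        / ((n1:ℝ) - 1)
      + (((n-2) * (n-3).choose (n1-2) : ℕ) : ℝ) / (n1:ℝ)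
      = ((n1:ℝ) - 1) / ((n:ℝ) - 1) * ((n.choose n1 : ℕ) : ℝ) := by
  rcases eq_or_lt_of_le h2 with rfl | hlt
  · -- n1 = n
    rcases Nat.lt_or_ge n1 3 with h3 | h3
    · interval_cases n1 <;> norm_num [Nat.choose]
    · rw [if_pos h3, Nat.choose_self, Nat.choose_self, Nat.choose_self,
        Nat.choose_eq_zero_of_lt (by omega)]
      have hne : (n1:ℝ) - 1 ≠ 0 := by
        have : (3:ℝ) ≤ n1 := by exact_mod_cast h3
        nlinarith
      have hcast : ((n1 - 2 : ℕ) : ℝ) = (n1:ℝ) - 2 := by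
        push_cast [Nat.cast_sub (by omega : 2 ≤ n1)]; ring
      push_cast
      rw [hcast]
      field_simp
      ring
  · rcases Nat.lt_or_ge n1 3 with h3 | h3
    · -- n1 = 2, n ≥ 3
      have hn1 : n1 = 2 := by omega
      subst hn1
      obtain ⟨m, rfl⟩ : ∃ m, n = m + 3 := ⟨n - 3, by omega⟩
      rw [if_neg (by omega)]
      have hc : (((m+3).choose 2 : ℕ) : ℝ) = ((m:ℝ)+3)*((m:ℝ)+2)/2 := by
        rw [Nat.cast_choose ℝ (by omega : 2 ≤ m + 3),
          show m + 3 - 2 = m + 1 by omega]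
        have e2 : ((Nat.factorial (m+3) : ℕ) : ℝ)
            = ((m:ℝ)+3)*((m:ℝ)+2)*((Nat.factorial (m+1) : ℕ) : ℝ) := by
          rw [show m + 3 = (m+2)+1 from rfl, Nat.factorial_succ,
            show m + 2 = (m+1)+1 from rfl, Nat.factorial_succ]
          push_cast
          ring
        rw [e2, show Nat.factorial 2 = 2 from rfl]
        field_simp [fact_ne]
        ring
      rw [show m + 3 - 2 = m + 1 by omega, show m + 3 - 3 = m by omega,
        show (2:ℕ) - 2 = 0 from rfl, Nat.choose_zero_right, Nat.choose_zero_right]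
      push_cast [hc]
      have hne : ((m:ℝ) + 3) - 1 ≠ 0 := by
        have : ((m:ℝ) + 3) - 1 = (m:ℝ) + 2 := by ring
        rw [this]; positivity
      field_simp
      ring
    · -- 3 ≤ n1 < n
      obtain ⟨k, rfl⟩ : ∃ k, n1 = k + 3 := ⟨n1 - 3, by omega⟩
      obtain ⟨d, rfl⟩ : ∃ d, n = k + 3 + (d + 1) := ⟨n - (k+3) - 1, by omega⟩
      rw [if_pos h3]
      rw [show k + 3 + (d+1) - 2 = k + d + 2 by omega,
        show k + 3 + (d+1) - 3 = k + d + 1 by omega,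
        show k + 3 - 2 = k + 1 by omega, show k + 3 - 3 = k by omega]
      have c1 : (((k+d+2).choose (k+1) : ℕ) : ℝ)
          = ((Nat.factorial (k+d+2) : ℕ) : ℝ)
            / (((Nat.factorial (k+1) : ℕ) : ℝ) * ((Nat.factorial (d+1) : ℕ) : ℝ)) := by
        rw [Nat.cast_choose ℝ (by omega : k + 1 ≤ k + d + 2),
          show k + d + 2 - (k+1) = d + 1 by omega]
      have c2 : (((k+d+1).choose k : ℕ) : ℝ)
          = ((Nat.factorial (k+d+1) : ℕ) : ℝ)
            / (((Nat.factorial k : ℕ) : ℝ) * ((Nat.factorial (d+1) : ℕ) : ℝ)) := by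
        rw [Nat.cast_choose ℝ (by omega : k ≤ k + d + 1),
          show k + d + 1 - k = d + 1 by omega]
      have c3 : (((k+d+1).choose (k+1) : ℕ) : ℝ)
          = ((Nat.factorial (k+d+1) : ℕ) : ℝ)
            / (((Nat.factorial (k+1) : ℕ) : ℝ) * ((Nat.factorial d : ℕ) : ℝ)) := by
        rw [Nat.cast_choose ℝ (by omega : k + 1 ≤ k + d + 1),
          show k + d + 1 - (k+1) = d by omega]
      have c4 : (((k+3+(d+1)).choose (k+3) : ℕ) : ℝ)
          = ((Nat.factorial (k+d+4) : ℕ) : ℝ)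
            / (((Nat.factorial (k+3) : ℕ) : ℝ) * ((Nat.factorial (d+1) : ℕ) : ℝ)) := by
        rw [Nat.cast_choose ℝ (by omega : k + 3 ≤ k + 3 + (d+1)),
          show k + 3 + (d+1) - (k+3) = d + 1 by omega,
          show k + 3 + (d+1) = k + d + 4 by omega]
      rw [Nat.cast_add, Nat.cast_mul, Nat.cast_mul, c1, c2, c3, c4]
      have f1 : ((Nat.factorial (k+d+2) : ℕ) : ℝ)
          = ((k:ℝ)+(d:ℝ)+2) * ((Nat.factorial (k+d+1) : ℕ) : ℝ) := by
        rw [show k+d+2 = (k+d+1)+1 from rfl, Nat.factorial_succ]; push_cast; ring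
      have f2 : ((Nat.factorial (k+d+4) : ℕ) : ℝ)
          = ((k:ℝ)+(d:ℝ)+4) * ((k:ℝ)+(d:ℝ)+3) * ((k:ℝ)+(d:ℝ)+2)
            * ((Nat.factorial (k+d+1) : ℕ) : ℝ) := by
        rw [show k+d+4 = ((k+d+2)+1)+1 from rfl, Nat.factorial_succ, Nat.factorial_succ,
          show k+d+2 = (k+d+1)+1 from rfl, Nat.factorial_succ]
        push_cast
        ring
      have f3 : ((Nat.factorial (k+1) : ℕ) : ℝ) = ((k:ℝ)+1) * ((Nat.factorial k : ℕ) : ℝ) := by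
        rw [Nat.factorial_succ]; push_cast; ring
      have f4 : ((Nat.factorial (k+3) : ℕ) : ℝ)
          = ((k:ℝ)+3) * ((k:ℝ)+2) * ((k:ℝ)+1) * ((Nat.factorial k : ℕ) : ℝ) := by
        rw [show k+3 = ((k+1)+1)+1 from rfl, Nat.factorial_succ, Nat.factorial_succ,
          Nat.factorial_succ]
        push_cast
        ring
      have f5 : ((Nat.factorial (d+1) : ℕ) : ℝ) = ((d:ℝ)+1) * ((Nat.factorial d : ℕ) : ℝ) := by
        rw [Nat.factorial_succ]; push_cast; ring
      rw [f1, f2, f3, f4, f5]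
      obtain ⟨F, hF, hF0⟩ : ∃ F : ℝ, ((Nat.factorial (k+d+1) : ℕ) : ℝ) = F ∧ F ≠ 0 :=
        ⟨_, rfl, fact_ne⟩
      obtain ⟨A, hA, hA0⟩ : ∃ A : ℝ, ((Nat.factorial k : ℕ) : ℝ) = A ∧ A ≠ 0 :=
        ⟨_, rfl, fact_ne⟩
      obtain ⟨D, hD, hD0⟩ : ∃ D : ℝ, ((Nat.factorial d : ℕ) : ℝ) = D ∧ D ≠ 0 :=
        ⟨_, rfl, fact_ne⟩
      rw [hF, hA, hD]
      push_cast
      have h5 : ((k:ℝ) + 3) - 1 = (k:ℝ) + 2 := by ring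
      have h6 : ((k:ℝ) + 3 + ((d:ℝ) + 1)) - 1 = (k:ℝ) + (d:ℝ) + 3 := by ring
      rw [h5, h6]
      have p1 : (0:ℝ) < (k:ℝ) + 1 := by positivity
      have p2 : (0:ℝ) < (k:ℝ) + 2 := by positivity
      have p3 : (0:ℝ) < (k:ℝ) + 3 := by positivity
      have p4 : (0:ℝ) < (d:ℝ) + 1 := by positivity
      have p5 : (0:ℝ) < (k:ℝ) + (d:ℝ) + 3 := by positivity
      field_simp
      ring

/-- Conditional on exactly n1 successes and I_1 nonempty, the expected proportion of
successes among trials immediately following a success is (n1-1)/(n-1). -/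
theorem stmt2 (n n1 : ℕ) (hn : 1 < n) (h1 : 2 ≤ n1) (h2 : n1 ≤ n)
    (p : ℝ) (hp : 0 < p) (hp1 : p < 1) :
    (∑ x : Fin n → Bool,
        if (streakSet 1 x).Nonempty ∧ ones x = n1 then wgt p x * phat 1 x else 0) /
    (∑ x : Fin n → Bool,
        if (streakSet 1 x).Nonempty ∧ ones x = n1 then wgt p x else 0)
      = ((n1 : ℝ) - 1) / ((n : ℝ) - 1) := by
  haveI : NeZero n := ⟨by omega⟩
  set W : ℝ := p ^ n1 * (1 - p) ^ (n - n1) with hWdef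
  have hWpos : 0 < W := by
    apply mul_pos (pow_pos hp _) (pow_pos (by linarith) _)
  -- replace the condition by ones x = n1
  have hnum : (∑ x : Fin n → Bool,
      if (streakSet 1 x).Nonempty ∧ ones x = n1 then wgt p x * phat 1 x else 0)
      = ∑ x ∈ univ.filter (fun x : Fin n → Bool => ones x = n1), W * phat 1 x := by
    rw [Finset.sum_filter]
    apply Finset.sum_congr rfl
    intro x _
    by_cases h : ones x = n1
    · rw [if_pos ⟨streak1_nonempty (h ▸ h1), h⟩, if_pos h, wgt_eq, h]
    · rw [if_neg (fun hh => h hh.2), if_neg h]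
  have hden : (∑ x : Fin n → Bool,
      if (streakSet 1 x).Nonempty ∧ ones x = n1 then wgt p x else 0)
      = ∑ x ∈ univ.filter (fun x : Fin n → Bool => ones x = n1), W := by
    rw [Finset.sum_filter]
    apply Finset.sum_congr rfl
    intro x _
    by_cases h : ones x = n1
    · rw [if_pos ⟨streak1_nonempty (h ▸ h1), h⟩, if_pos h, wgt_eq, h]
    · rw [if_neg (fun hh => h hh.2), if_neg h]
  rw [hnum, hden, ← Finset.mul_sum, Finset.sum_const, nsmul_eq_mul]
  -- count of sequences with exactly n1 ones
  have hcount : (univ.filter (fun x : Fin n → Bool => ones x = n1)).card = n.choose n1 := by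
    have hpred : ∀ x ∈ (univ : Finset (Fin n → Bool)),
        (ones x = n1 ↔ (ones x = n1 ∧ (∀ i ∈ (∅ : Finset (Fin n)), x i = true) ∧
          (∀ i ∈ (∅ : Finset (Fin n)), x i = false))) := by
      intro x _; simp
    rw [Finset.filter_congr hpred, count_supersets _ _ (Finset.disjoint_empty_right _)
      (by simp)]
    simp
  rw [hcount]
  have hchoosepos : 0 < (n.choose n1 : ℝ) := by
    exact_mod_cast Nat.choose_pos h2
  -- split the phat sum by the last coordinate
  have hsplit : (∑ x ∈ univ.filter (fun x : Fin n → Bool => ones x = n1), phat 1 x)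
      = (∑ x ∈ univ.filter (fun x : Fin n → Bool => ones x = n1 ∧ x (lst n) = true), phat 1 x)
      + (∑ x ∈ univ.filter (fun x : Fin n → Bool => ones x = n1 ∧ x (lst n) = false), phat 1 x) := by
    rw [← Finset.sum_filter_add_sum_filter_not
      (univ.filter (fun x : Fin n → Bool => ones x = n1)) (fun x => x (lst n) = true)]
    rw [Finset.filter_filter, Finset.filter_filter]
    congr 1
    apply Finset.sum_congr _ (fun _ _ => rfl)
    apply Finset.filter_congr
    intro x _
    simp [Bool.not_eq_true]
  rw [hsplit]
  -- evaluate each piece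
  have hA : (∑ x ∈ univ.filter (fun x : Fin n → Bool => ones x = n1 ∧ x (lst n) = true), phat 1 x)
      = (((n-2).choose (n1-2) + (n-2) * (if 3 ≤ n1 then (n-3).choose (n1-3) else 0) : ℕ) : ℝ)
        / ((n1:ℝ) - 1) := by
    rw [← SA_eq hn h1]
    rw [Nat.cast_sum, Finset.sum_div]
    apply Finset.sum_congr rfl
    intro x hx
    simp only [mem_filter] at hx
    rw [phat, Finset.sum_boole, streak1_card', hx.2.1, hx.2.2, if_pos rfl]
    have : ((n1 - 1 : ℕ) : ℝ) = (n1:ℝ) - 1 := by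
      push_cast [Nat.cast_sub (by omega : 1 ≤ n1)]; ring
    rw [this]
  have hB : (∑ x ∈ univ.filter (fun x : Fin n → Bool => ones x = n1 ∧ x (lst n) = false), phat 1 x)
      = (((n-2) * (n-3).choose (n1-2) : ℕ) : ℝ) / (n1:ℝ) := by
    rw [← SB_eq hn h1]
    rw [Nat.cast_sum, Finset.sum_div]
    apply Finset.sum_congr rfl
    intro x hx
    simp only [mem_filter] at hx
    rw [phat, Finset.sum_boole, streak1_card', hx.2.1, hx.2.2]
    norm_num
  rw [hA, hB, arith h1 h2]
  rw [mul_comm ((W : ℝ)) _]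
  rw [mul_div_mul_right _ _ (ne_of_gt hWpos)]
  rw [mul_div_assoc, div_self (ne_of_gt hchoosepos), mul_one]
end

section
/- For n > 2 and 0 < p < 1, the unconditional expectation of the proportion of successes on trials immediately following a success, conditional on this proportion being defined, equals [p − (1−(1−p)^n)/n]·(n/(n−1)) / (1 − (1−p)^{n−1}). -/
open Finset

namespace S3

def bi (b : Bool) : ℝ := if b then 1 else 0

lemma bi_mul_self (b : Bool) : bi b * bi b = bi b := by cases b <;> simp [bi]

variable {n : ℕ}

def pre (n : ℕ) : Finset (Fin n) := Finset.univ.filter (fun i => i.val < n - 1)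

lemma mem_pre {i : Fin n} : i ∈ pre n ↔ i.val < n - 1 := by simp [pre]

def Kp (x : Fin n → Bool) : ℕ := ((pre n).filter (fun i => x i = true)).card

def prevF (i : Fin n) : Fin n := ⟨i.val - 1, lt_of_le_of_lt (Nat.sub_le _ _) i.isLt⟩

def lastF (n : ℕ) (h : 0 < n) : Fin n := ⟨n - 1, by omega⟩

noncomputable def G (p : ℝ) (a b : Fin n) : ℝ :=
  ∑ x : Fin n → Bool, wgt p x * (bi (x a) * bi (x b)) / (Kp x : ℝ)

lemma mem_streak1 (x : Fin n → Bool) (i : Fin n) :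
    i ∈ streakSet 1 x ↔ 1 ≤ i.val ∧ x (prevF i) = true := by
  simp only [streakSet, mem_filter, mem_univ, true_and]
  constructor
  · rintro ⟨h1, h2⟩
    exact ⟨h1, h2 (prevF i) le_rfl (by simp [prevF]; omega)⟩
  · rintro ⟨h1, h2⟩
    refine ⟨h1, fun j hj1 hj2 => ?_⟩
    have : j = prevF i := Fin.ext (by simp [prevF]; omega)
    rwa [this]

lemma card_streak (x : Fin n → Bool) : (streakSet 1 x).card = Kp x := by
  apply Finset.card_bij (fun i _ => prevF i)
  · intro a ha
    rw [mem_streak1] at ha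
    simp only [mem_filter, mem_pre]
    exact ⟨by simp [prevF]; omega, ha.2⟩
  · intro a ha b hb h
    rw [mem_streak1] at ha hb
    apply Fin.ext
    have hv := congrArg Fin.val h
    simp only [prevF] at hv
    omega
  · intro b hb
    simp only [mem_filter, mem_pre] at hb
    have hblt : b.val + 1 < n := by omega
    refine ⟨⟨b.val + 1, hblt⟩, ?_, ?_⟩
    · rw [mem_streak1]
      constructor
      · simp
      · have : prevF (⟨b.val + 1, hblt⟩ : Fin n) = b := Fin.ext (by simp [prevF])
        rw [this]; exact hb.2
    · exact Fin.ext (by simp [prevF])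

lemma nonempty_iff (x : Fin n → Bool) : (streakSet 1 x).Nonempty ↔ Kp x ≠ 0 := by
  rw [← Finset.card_pos, card_streak]
  omega

lemma card_pre (h : 0 < n) : (pre n).card = n - 1 := by
  have h0 : (univ : Finset (Fin (n-1))).card = n - 1 := by
    rw [Finset.card_univ, Fintype.card_fin]
  rw [← h0]
  refine Finset.card_bij' (fun a ha => (⟨a.val, mem_pre.mp ha⟩ : Fin (n-1)))
    (fun a _ => (⟨a.val, by have := a.isLt; omega⟩ : Fin n)) ?_ ?_ ?_ ?_
  · intro a ha; exact mem_univ _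
  · intro a ha; rw [mem_pre]; exact a.isLt
  · intro a ha; exact Fin.ext rfl
  · intro a ha; exact Fin.ext rfl

lemma card_mid (hn : 2 < n) :
    (Finset.univ.filter (fun i : Fin n => 1 ≤ i.val ∧ i.val < n - 1)).card = n - 2 := by
  have h0 : (univ : Finset (Fin (n-2))).card = n - 2 := by
    rw [Finset.card_univ, Fintype.card_fin]
  rw [← h0]
  refine Finset.card_bij' (fun a ha => (⟨a.val - 1, by simp at ha; omega⟩ : Fin (n-2)))
    (fun a _ => (⟨a.val + 1, by have := a.isLt; omega⟩ : Fin n)) ?_ ?_ ?_ ?_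
  · intro a ha; exact mem_univ _
  · intro a ha; simp only [mem_filter, mem_univ, true_and]
    have := a.isLt; exact ⟨by omega, by omega⟩
  · intro a ha; simp only [mem_filter, mem_univ, true_and] at ha
    exact Fin.ext (by simp; omega)
  · intro a ha; exact Fin.ext (by simp)

lemma sum_pi_prod (h : Fin n → Bool → ℝ) :
    ∑ x : Fin n → Bool, ∏ i, h i (x i) = ∏ i, (h i false + h i true) := by
  have h2 : ∏ i, (h i false + h i true) = ∏ i, ∑ b : Bool, h i b := by
    refine Finset.prod_congr rfl fun i _ => ?_
    rw [Fintype.sum_bool]; ring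
  rw [h2, Finset.prod_univ_sum, Fintype.piFinset_univ]

lemma sum_wgt_mul (p : ℝ) (c : Fin n → Bool → ℝ) :
    ∑ x : Fin n → Bool, wgt p x * ∏ i, c i (x i)
      = ∏ i, ((1 - p) * c i false + p * c i true) := by
  have h1 : ∀ x : Fin n → Bool, wgt p x * ∏ i, c i (x i)
      = ∏ i, ((if x i then p else 1 - p) * c i (x i)) := by
    intro x; rw [wgt, ← Finset.prod_mul_distrib]
  rw [Finset.sum_congr rfl (fun x _ => h1 x)]
  rw [sum_pi_prod (fun i b => (if b then p else 1 - p) * c i b)]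
  refine Finset.prod_congr rfl fun i _ => by simp only [if_true, Bool.false_eq_true, if_false]; try ring

lemma sum_wgt (p : ℝ) : ∑ x : Fin n → Bool, wgt p x = 1 := by
  have := sum_wgt_mul (n := n) p (fun _ _ => 1)
  simpa using this

lemma sum_wgt_bi (p : ℝ) (a : Fin n) : ∑ x : Fin n → Bool, wgt p x * bi (x a) = p := by
  have h1 : ∀ x : Fin n → Bool, bi (x a) = ∏ i, (if i = a then bi (x i) else 1) := by
    intro x; rw [Finset.prod_ite_eq' univ a (fun i => bi (x i))]; simp
  calc ∑ x : Fin n → Bool, wgt p x * bi (x a)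
      = ∑ x : Fin n → Bool, wgt p x * ∏ i, (fun i b => if i = a then bi b else 1) i (x i) := by
        exact Finset.sum_congr rfl fun x _ => by rw [← h1]
    _ = ∏ i, ((1-p) * (if i = a then bi false else 1) + p * (if i = a then bi true else 1)) :=
        sum_wgt_mul p (fun i b => if i = a then bi b else 1)
    _ = ∏ i : Fin n, (if i = a then p else 1) := by
        refine Finset.prod_congr rfl fun i _ => ?_
        by_cases h : i = a
        · simp [h, bi]
        · simp [h]
    _ = p := by rw [Finset.prod_ite_eq' univ a (fun _ => p)]; simp

noncomputable def Z (x : Fin n → Bool) : ℝ := if Kp x = 0 then 1 else 0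

noncomputable def ZK (x : Fin n → Bool) : ℝ := if Kp x = 0 then 0 else 1

lemma Kp_zero_iff (x : Fin n → Bool) : Kp x = 0 ↔ ∀ i ∈ pre n, x i = false := by
  rw [Kp, Finset.card_eq_zero, Finset.filter_eq_empty_iff]
  simp

lemma prod_Z (x : Fin n → Bool) :
    ∏ i ∈ pre n, (if x i then (0:ℝ) else 1) = Z x := by
  by_cases h : Kp x = 0
  · rw [Z, if_pos h]
    refine Finset.prod_eq_one fun i hi => ?_
    have := (Kp_zero_iff x).mp h i hi
    simp [this]
  · rw [Z, if_neg h]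
    have hex : ∃ i ∈ pre n, x i = true := by
      by_contra hc
      push_neg at hc
      exact h ((Kp_zero_iff x).mpr (fun i hi => by simpa using hc i hi))
    obtain ⟨i, hi, hxi⟩ := hex
    exact Finset.prod_eq_zero hi (by simp [hxi])

lemma filter_not_pre (h : 0 < n) :
    Finset.univ.filter (fun i : Fin n => ¬ i.val < n - 1) = {lastF n h} := by
  ext i
  simp only [mem_filter, mem_univ, true_and, mem_singleton, Fin.ext_iff, lastF]
  have := i.isLt
  omega

lemma pre_eq_filter : pre n = Finset.univ.filter (fun i : Fin n => i.val < n - 1) := rfl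

lemma sum_wgt_Z (p : ℝ) (h : 0 < n) :
    ∑ x : Fin n → Bool, wgt p x * Z x = (1-p)^(n-1) := by
  have key : ∀ x : Fin n → Bool,
      Z x = ∏ i, (fun i b => if i.val < n - 1 then (if b then (0:ℝ) else 1) else 1) i (x i) := by
    intro x
    rw [Finset.prod_ite (fun i => if x i then (0:ℝ) else 1) (fun _ => (1:ℝ)),
      Finset.prod_const_one, mul_one, ← pre_eq_filter, prod_Z]
  calc ∑ x : Fin n → Bool, wgt p x * Z x
      = ∑ x : Fin n → Bool, wgt p x *
          ∏ i, (fun i b => if i.val < n - 1 then (if b then (0:ℝ) else 1) else 1) i (x i) :=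
        Finset.sum_congr rfl fun x _ => by rw [← key]
    _ = ∏ i : Fin n, ((1-p) * (if i.val < n - 1 then (1:ℝ) else 1)
          + p * (if i.val < n - 1 then (0:ℝ) else 1)) :=
        sum_wgt_mul p (fun i b => if i.val < n - 1 then (if b then (0:ℝ) else 1) else 1)
    _ = ∏ i : Fin n, (if i.val < n - 1 then (1-p) else 1) := by
        refine Finset.prod_congr rfl fun i _ => ?_
        by_cases hi : i.val < n - 1 <;> simp [hi]
    _ = (1-p)^(n-1) := by
        rw [← Finset.prod_filter, ← pre_eq_filter, Finset.prod_const, card_pre h]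

lemma sum_wgt_bi_last_Z (p : ℝ) (h : 0 < n) :
    ∑ x : Fin n → Bool, wgt p x * (bi (x (lastF n h)) * Z x) = p * (1-p)^(n-1) := by
  have key : ∀ x : Fin n → Bool,
      bi (x (lastF n h)) * Z x
        = ∏ i, (fun i b => if i.val < n - 1 then (if b then (0:ℝ) else 1) else bi b) i (x i) := by
    intro x
    rw [Finset.prod_ite (fun i => if x i then (0:ℝ) else 1) (fun i => bi (x i)),
      ← pre_eq_filter, prod_Z, filter_not_pre h, Finset.prod_singleton, mul_comm]
  calc ∑ x : Fin n → Bool, wgt p x * (bi (x (lastF n h)) * Z x)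
      = ∑ x : Fin n → Bool, wgt p x *
          ∏ i, (fun i b => if i.val < n - 1 then (if b then (0:ℝ) else 1) else bi b) i (x i) :=
        Finset.sum_congr rfl fun x _ => by rw [← key]
    _ = ∏ i : Fin n, ((1-p) * (if i.val < n - 1 then (1:ℝ) else bi false)
          + p * (if i.val < n - 1 then (0:ℝ) else bi true)) :=
        sum_wgt_mul p (fun i b => if i.val < n - 1 then (if b then (0:ℝ) else 1) else bi b)
    _ = ∏ i : Fin n, (if i.val < n - 1 then (1-p) else p) := by
        refine Finset.prod_congr rfl fun i _ => ?_
        by_cases hi : i.val < n - 1 <;> simp [hi, bi]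
    _ = p * (1-p)^(n-1) := by
        rw [Finset.prod_ite (fun _ => (1-p : ℝ)) (fun _ => (p : ℝ)), ← pre_eq_filter,
          Finset.prod_const, card_pre h, filter_not_pre h, Finset.prod_singleton, mul_comm]

lemma wgt_comp (p : ℝ) (π : Equiv.Perm (Fin n)) (x : Fin n → Bool) :
    wgt p (fun i => x (π i)) = wgt p x := by
  rw [wgt, wgt]
  exact Equiv.prod_comp π (fun j => if x j then p else 1 - p)

lemma Kp_comp (π : Equiv.Perm (Fin n)) (hπ : ∀ i, (π i).val < n - 1 ↔ i.val < n - 1)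
    (x : Fin n → Bool) : Kp (fun i => x (π i)) = Kp x := by
  apply Finset.card_bij (fun a _ => π a)
  · intro a ha
    simp only [mem_filter, mem_pre] at ha ⊢
    exact ⟨(hπ a).mpr ha.1, ha.2⟩
  · intro a _ b _ hab
    exact π.injective hab
  · intro b hb
    simp only [mem_filter, mem_pre] at hb ⊢
    refine ⟨π.symm b, ⟨?_, ?_⟩, π.apply_symm_apply b⟩
    · have h2 := hπ (π.symm b)
      rw [π.apply_symm_apply] at h2
      exact h2.mp hb.1
    · rw [π.apply_symm_apply]
      exact hb.2

lemma G_perm (p : ℝ) (π : Equiv.Perm (Fin n)) (hπ : ∀ i, (π i).val < n - 1 ↔ i.val < n - 1)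
    (a b : Fin n) : G p (π a) (π b) = G p a b := by
  rw [G, G]
  refine Fintype.sum_equiv (Equiv.arrowCongr π.symm (Equiv.refl Bool)) _ _ (fun x => ?_)
  have he : (Equiv.arrowCongr π.symm (Equiv.refl Bool)) x = fun i => x (π i) := by
    funext i
    simp [Equiv.arrowCongr]
  rw [he, wgt_comp p π x, Kp_comp π hπ x]

lemma swap_pre {u v : Fin n} (hu : u.val < n - 1) (hv : v.val < n - 1) (i : Fin n) :
    ((Equiv.swap u v) i).val < n - 1 ↔ i.val < n - 1 := by
  rcases eq_or_ne i u with h | h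
  · subst h; rw [Equiv.swap_apply_left]; simp [hu, hv]
  rcases eq_or_ne i v with h2 | h2
  · subst h2; rw [Equiv.swap_apply_right]; simp [hu, hv]
  · rw [Equiv.swap_apply_of_ne_of_ne h h2]

lemma G_eq (p : ℝ) {a b a' b' : Fin n} (ha : a.val < n - 1) (hb : b.val < n - 1)
    (ha' : a'.val < n - 1) (hb' : b'.val < n - 1) (hab : a ≠ b) (hab' : a' ≠ b') :
    G p a b = G p a' b' := by
  set s1 := Equiv.swap a a' with hs1
  set b1 := s1 b' with hb1def
  have hb1 : b1.val < n - 1 := by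
    rw [hb1def, hs1, Equiv.swap_apply_def]
    split_ifs <;> assumption
  have hb1a : b1 ≠ a := by
    intro h
    apply hab'
    have : s1 a' = a := Equiv.swap_apply_right a a'
    exact (s1.injective (h.trans this.symm)).symm ▸ rfl
  set s2 := Equiv.swap b b1 with hs2
  set π := s1.trans s2 with hπdef
  have hπ : ∀ i, (π i).val < n - 1 ↔ i.val < n - 1 := by
    intro i
    rw [hπdef]
    simp only [Equiv.trans_apply]
    rw [swap_pre hb hb1 (s1 i), swap_pre ha ha' i]
  have h1 : π a' = a := by
    rw [hπdef]
    simp only [Equiv.trans_apply]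
    rw [hs1, Equiv.swap_apply_right, hs2, Equiv.swap_apply_of_ne_of_ne hab (Ne.symm hb1a)]
  have h2 : π b' = b := by
    rw [hπdef]
    simp only [Equiv.trans_apply]
    rw [← hb1def, hs2, Equiv.swap_apply_right]
  rw [← h1, ← h2, G_perm p π hπ a' b']

lemma G_eq_last (p : ℝ) {a a' c : Fin n} (ha : a.val < n - 1) (ha' : a'.val < n - 1)
    (hc : ¬ c.val < n - 1) : G p a c = G p a' c := by
  set π := Equiv.swap a a' with hπdef
  have hπ : ∀ i, (π i).val < n - 1 ↔ i.val < n - 1 := swap_pre ha ha'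
  have h1 : π a' = a := Equiv.swap_apply_right a a'
  have h2 : π c = c := by
    apply Equiv.swap_apply_of_ne_of_ne
    · intro h; exact hc (h ▸ ha)
    · intro h; exact hc (h ▸ ha')
  rw [← h1]
  nth_rewrite 1 [← h2]
  rw [G_perm p π hπ a' c]

lemma kp_cast (x : Fin n → Bool) : (Kp x : ℝ) = ∑ a ∈ pre n, bi (x a) := by
  rw [Kp, Finset.card_filter]
  push_cast
  refine Finset.sum_congr rfl fun a _ => ?_
  by_cases h : x a <;> simp [h, bi]

lemma sum_wgt_K (p : ℝ) (h : 0 < n) :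
    ∑ x : Fin n → Bool, wgt p x * (Kp x : ℝ) = ((n:ℝ) - 1) * p := by
  have h1 : ∀ x : Fin n → Bool, wgt p x * (Kp x : ℝ) = ∑ a ∈ pre n, wgt p x * bi (x a) := by
    intro x; rw [kp_cast, Finset.mul_sum]
  rw [Finset.sum_congr rfl fun x _ => h1 x, Finset.sum_comm,
    Finset.sum_congr rfl fun a _ => sum_wgt_bi p a, Finset.sum_const, card_pre h,
    nsmul_eq_mul, Nat.cast_sub (by omega : 1 ≤ n), Nat.cast_one]

lemma sum_wgt_ZK (p : ℝ) (h : 0 < n) :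
    ∑ x : Fin n → Bool, wgt p x * ZK x = 1 - (1-p)^(n-1) := by
  have hZ : ∀ x : Fin n → Bool, wgt p x * ZK x = wgt p x - wgt p x * Z x := by
    intro x; rw [ZK, Z]; by_cases hx : Kp x = 0 <;> simp [hx]
  rw [Finset.sum_congr rfl fun x _ => hZ x, Finset.sum_sub_distrib, sum_wgt, sum_wgt_Z p h]

lemma sum_wgt_last_ZK (p : ℝ) (h : 0 < n) :
    ∑ x : Fin n → Bool, wgt p x * (bi (x (lastF n h)) * ZK x) = p - p * (1-p)^(n-1) := by
  have hZ : ∀ x : Fin n → Bool, wgt p x * (bi (x (lastF n h)) * ZK x)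
      = wgt p x * bi (x (lastF n h)) - wgt p x * (bi (x (lastF n h)) * Z x) := by
    intro x; rw [ZK, Z]; by_cases hx : Kp x = 0 <;> simp [hx] <;> ring
  rw [Finset.sum_congr rfl fun x _ => hZ x, Finset.sum_sub_distrib, sum_wgt_bi p _,
    sum_wgt_bi_last_Z p h]

lemma pair_sum (p : ℝ) (x : Fin n → Bool) :
    ∑ a ∈ pre n, ∑ b ∈ (pre n).erase a, wgt p x * (bi (x a) * bi (x b)) / (Kp x : ℝ)
      = wgt p x * (Kp x : ℝ) - wgt p x * ZK x := by
  have hA : ∑ a ∈ pre n, ∑ b ∈ (pre n).erase a, bi (x a) * bi (x b)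
      = (Kp x : ℝ) * (Kp x : ℝ) - (Kp x : ℝ) := by
    have h1 : ∀ a ∈ pre n, ∑ b ∈ (pre n).erase a, bi (x a) * bi (x b)
        = bi (x a) * (Kp x : ℝ) - bi (x a) := by
      intro a ha
      rw [← Finset.mul_sum, Finset.sum_erase_eq_sub ha, ← kp_cast, mul_sub, bi_mul_self]
    rw [Finset.sum_congr rfl h1, Finset.sum_sub_distrib, ← Finset.sum_mul, ← kp_cast]
  have h2 : ∀ a b : Fin n, wgt p x * (bi (x a) * bi (x b)) / (Kp x : ℝ)
      = (bi (x a) * bi (x b)) * (wgt p x / (Kp x : ℝ)) := fun a b => by ring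
  calc ∑ a ∈ pre n, ∑ b ∈ (pre n).erase a, wgt p x * (bi (x a) * bi (x b)) / (Kp x : ℝ)
      = ∑ a ∈ pre n, ∑ b ∈ (pre n).erase a, (bi (x a) * bi (x b)) * (wgt p x / (Kp x : ℝ)) := by
        exact Finset.sum_congr rfl fun a _ => Finset.sum_congr rfl fun b _ => h2 a b
    _ = (∑ a ∈ pre n, ∑ b ∈ (pre n).erase a, bi (x a) * bi (x b)) * (wgt p x / (Kp x : ℝ)) := by
        rw [Finset.sum_mul]
        exact Finset.sum_congr rfl fun a _ => by rw [Finset.sum_mul]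
    _ = ((Kp x : ℝ) * (Kp x : ℝ) - (Kp x : ℝ)) * (wgt p x / (Kp x : ℝ)) := by rw [hA]
    _ = wgt p x * (Kp x : ℝ) - wgt p x * ZK x := by
        by_cases hx : Kp x = 0
        · simp [hx, ZK]
        · rw [ZK, if_neg hx]
          have hK : (Kp x : ℝ) ≠ 0 := Nat.cast_ne_zero.mpr hx
          field_simp

lemma agg1 (p : ℝ) (hn : 2 < n) {a b : Fin n} (hav : a.val < n - 1) (hbv : b.val < n - 1)
    (hab : a ≠ b) :
    ((n:ℝ) - 1) * (((n:ℝ) - 2) * G p a b) = ((n:ℝ) - 1) * p - (1 - (1-p)^(n-1)) := by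
  have h0 : (0:ℕ) < n := by omega
  have key2 : ∑ a' ∈ pre n, ∑ b' ∈ (pre n).erase a', G p a' b'
      = ((n:ℝ) - 1) * p - (1 - (1-p)^(n-1)) := by
    calc ∑ a' ∈ pre n, ∑ b' ∈ (pre n).erase a', G p a' b'
        = ∑ a' ∈ pre n, ∑ x : Fin n → Bool, ∑ b' ∈ (pre n).erase a',
            wgt p x * (bi (x a') * bi (x b')) / (Kp x : ℝ) :=
          Finset.sum_congr rfl fun a' _ => Finset.sum_comm
      _ = ∑ x : Fin n → Bool, ∑ a' ∈ pre n, ∑ b' ∈ (pre n).erase a',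
            wgt p x * (bi (x a') * bi (x b')) / (Kp x : ℝ) := Finset.sum_comm
      _ = ∑ x : Fin n → Bool, (wgt p x * (Kp x : ℝ) - wgt p x * ZK x) :=
          Finset.sum_congr rfl fun x _ => pair_sum p x
      _ = ((n:ℝ) - 1) * p - (1 - (1-p)^(n-1)) := by
          rw [Finset.sum_sub_distrib, sum_wgt_K p h0, sum_wgt_ZK p h0]
  have key : ∑ a' ∈ pre n, ∑ b' ∈ (pre n).erase a', G p a' b'
      = ((n:ℝ) - 1) * (((n:ℝ) - 2) * G p a b) := by
    have hinner : ∀ a' ∈ pre n, ∑ b' ∈ (pre n).erase a', G p a' b'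
        = ((n:ℝ) - 2) * G p a b := by
      intro a' ha'
      have hG : ∀ b' ∈ (pre n).erase a', G p a' b' = G p a b := by
        intro b' hb'
        exact G_eq p (mem_pre.mp ha') (mem_pre.mp (Finset.mem_of_mem_erase hb')) hav hbv
          (Ne.symm (Finset.ne_of_mem_erase hb')) hab
      rw [Finset.sum_congr rfl hG, Finset.sum_const, Finset.card_erase_of_mem ha',
        card_pre h0, nsmul_eq_mul]
      congr 1
      have hm : n - 1 - 1 = n - 2 := by omega
      rw [hm, Nat.cast_sub (by omega : 2 ≤ n)]
      norm_num
    rw [Finset.sum_congr rfl hinner, Finset.sum_const, card_pre h0, nsmul_eq_mul,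
      Nat.cast_sub (by omega : 1 ≤ n), Nat.cast_one]
  rw [← key, key2]

lemma agg2 (p : ℝ) (hn : 2 < n) {a c : Fin n} (hav : a.val < n - 1) (hcv : ¬ c.val < n - 1) :
    ((n:ℝ) - 1) * G p a c = p - p * (1-p)^(n-1) := by
  have h0 : (0:ℕ) < n := by omega
  have hc : c = lastF n h0 := Fin.ext (by have := c.isLt; simp only [lastF]; omega)
  subst hc
  have pair2 : ∀ x : Fin n → Bool,
      ∑ a' ∈ pre n, wgt p x * (bi (x a') * bi (x (lastF n h0))) / (Kp x : ℝ)
        = wgt p x * (bi (x (lastF n h0)) * ZK x) := by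
    intro x
    have h2 : ∀ a' : Fin n, wgt p x * (bi (x a') * bi (x (lastF n h0))) / (Kp x : ℝ)
        = bi (x a') * (wgt p x * bi (x (lastF n h0)) / (Kp x : ℝ)) := fun a' => by ring
    rw [Finset.sum_congr rfl fun a' _ => h2 a', ← Finset.sum_mul, ← kp_cast]
    by_cases hx : Kp x = 0
    · simp [hx, ZK]
    · rw [ZK, if_neg hx]
      have hK : (Kp x : ℝ) ≠ 0 := Nat.cast_ne_zero.mpr hx
      field_simp
  have key : ∑ a' ∈ pre n, G p a' (lastF n h0) = p - p * (1-p)^(n-1) := by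
    calc ∑ a' ∈ pre n, G p a' (lastF n h0)
        = ∑ x : Fin n → Bool, ∑ a' ∈ pre n,
            wgt p x * (bi (x a') * bi (x (lastF n h0))) / (Kp x : ℝ) := Finset.sum_comm
      _ = ∑ x : Fin n → Bool, wgt p x * (bi (x (lastF n h0)) * ZK x) :=
          Finset.sum_congr rfl fun x _ => pair2 x
      _ = p - p * (1-p)^(n-1) := sum_wgt_last_ZK p h0
  have keyc : ∑ a' ∈ pre n, G p a' (lastF n h0) = ((n:ℝ) - 1) * G p a (lastF n h0) := by
    rw [Finset.sum_congr rfl (fun a' ha' => G_eq_last p (mem_pre.mp ha') hav hcv),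
      Finset.sum_const, card_pre h0, nsmul_eq_mul, Nat.cast_sub (by omega : 1 ≤ n)]
    norm_num
  rw [← keyc, key]

lemma D_eq (p : ℝ) (hn : 2 < n) :
    ∑ x : Fin n → Bool, (if (streakSet 1 x).Nonempty then wgt p x else 0)
      = 1 - (1-p)^(n-1) := by
  have h0 : (0:ℕ) < n := by omega
  have h1 : ∀ x : Fin n → Bool,
      (if (streakSet 1 x).Nonempty then wgt p x else 0) = wgt p x * ZK x := by
    intro x
    rw [ZK]
    by_cases hx : (streakSet 1 x).Nonempty
    · rw [if_pos hx, if_neg ((nonempty_iff x).mp hx), mul_one]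
    · have hk : Kp x = 0 := by
        by_contra hk
        exact hx ((nonempty_iff x).mpr hk)
      rw [if_neg hx, hk, if_pos rfl, mul_zero]
  rw [Finset.sum_congr rfl fun x _ => h1 x, sum_wgt_ZK p h0]

lemma N_val (p : ℝ) (hn : 2 < n) :
    ∑ x : Fin n → Bool, (if (streakSet 1 x).Nonempty then wgt p x * phat 1 x else 0)
      = ((n:ℝ) * p - 1 + (1-p)^n) / ((n:ℝ) - 1) := by
  have h0 : (0:ℕ) < n := by omega
  set i0 : Fin n := ⟨0, by omega⟩ with hi0
  set i1 : Fin n := ⟨1, by omega⟩ with hi1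
  set lst : Fin n := lastF n h0 with hlst
  have hi0v : i0.val < n - 1 := by rw [hi0]; exact (show (0:ℕ) < n - 1 by omega)
  have hi1v : i1.val < n - 1 := by rw [hi1]; exact (show (1:ℕ) < n - 1 by omega)
  have hi01 : i0 ≠ i1 := by
    rw [hi0, hi1]
    intro h
    exact absurd (congrArg Fin.val h) (show ¬ (0:ℕ) = 1 by omega)
  have hlstv : ¬ lst.val < n - 1 := by rw [hlst]; simp [lastF]
  have hprevv : (prevF lst).val < n - 1 := by rw [hlst]; simp [prevF, lastF]; omega
  -- remove the conditional
  have h1 : ∀ x : Fin n → Bool,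
      (∑ i : Fin n, if i ∈ streakSet 1 x then wgt p x * bi (x i) / (Kp x : ℝ) else 0)
        = (if (streakSet 1 x).Nonempty then wgt p x * phat 1 x else 0) := by
    intro x
    rw [Finset.sum_ite_mem, Finset.univ_inter]
    by_cases hx : (streakSet 1 x).Nonempty
    · rw [if_pos hx, phat, card_streak]
      simp only [bi]
      rw [← Finset.sum_div, ← Finset.mul_sum, mul_div_assoc]
    · rw [if_neg hx]
      rw [Finset.not_nonempty_iff_eq_empty] at hx
      rw [hx, Finset.sum_empty]
  -- value of the inner sum for fixed i
  have hT : ∀ i : Fin n, 1 ≤ i.val →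
      (∑ x : Fin n → Bool, if i ∈ streakSet 1 x then wgt p x * bi (x i) / (Kp x : ℝ) else 0)
        = G p (prevF i) i := by
    intro i hi
    rw [G]
    refine Finset.sum_congr rfl fun x _ => ?_
    by_cases hpv : x (prevF i) = true
    · rw [if_pos ((mem_streak1 x i).mpr ⟨hi, hpv⟩), hpv]
      simp [bi]
    · rw [if_neg (fun hmem => hpv ((mem_streak1 x i).mp hmem).2)]
      have hf : x (prevF i) = false := by simpa using hpv
      simp [hf, bi]
  have hT0 : ∀ i : Fin n, ¬ 1 ≤ i.val →
      (∑ x : Fin n → Bool, if i ∈ streakSet 1 x then wgt p x * bi (x i) / (Kp x : ℝ) else 0)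
        = 0 := by
    intro i hi
    refine Finset.sum_eq_zero fun x _ => ?_
    rw [if_neg (fun hmem => hi ((mem_streak1 x i).mp hmem).1)]
  -- structural identity
  have hsplit : Finset.univ.filter (fun i : Fin n => 1 ≤ i.val)
      = insert lst (Finset.univ.filter (fun i : Fin n => 1 ≤ i.val ∧ i.val < n - 1)) := by
    ext i
    simp only [mem_filter, mem_univ, true_and, mem_insert, Fin.ext_iff, hlst, lastF]
    have := i.isLt
    omega
  have hnotmem : lst ∉ Finset.univ.filter (fun i : Fin n => 1 ≤ i.val ∧ i.val < n - 1) := by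
    simp only [mem_filter, mem_univ, true_and, hlst, lastF, not_and]
    omega
  have hstruct : ∑ x : Fin n → Bool,
      (if (streakSet 1 x).Nonempty then wgt p x * phat 1 x else 0)
        = ((n:ℝ) - 2) * G p i0 i1 + G p (prevF lst) lst := by
    calc ∑ x : Fin n → Bool, (if (streakSet 1 x).Nonempty then wgt p x * phat 1 x else 0)
        = ∑ x : Fin n → Bool, ∑ i : Fin n,
            (if i ∈ streakSet 1 x then wgt p x * bi (x i) / (Kp x : ℝ) else 0) :=
          Finset.sum_congr rfl fun x _ => (h1 x).symm
      _ = ∑ i : Fin n, ∑ x : Fin n → Bool,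
            (if i ∈ streakSet 1 x then wgt p x * bi (x i) / (Kp x : ℝ) else 0) :=
          Finset.sum_comm
      _ = ∑ i ∈ Finset.univ.filter (fun i : Fin n => 1 ≤ i.val), ∑ x : Fin n → Bool,
            (if i ∈ streakSet 1 x then wgt p x * bi (x i) / (Kp x : ℝ) else 0) :=
          (Finset.sum_subset (Finset.filter_subset _ _)
            (fun i _ hi => hT0 i (by simpa using hi))).symm
      _ = ((n:ℝ) - 2) * G p i0 i1 + G p (prevF lst) lst := by
          rw [hsplit, Finset.sum_insert hnotmem]
          rw [hT lst (by rw [hlst]; simp [lastF]; omega)]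
          have hmid : ∀ i ∈ Finset.univ.filter (fun i : Fin n => 1 ≤ i.val ∧ i.val < n - 1),
              (∑ x : Fin n → Bool,
                if i ∈ streakSet 1 x then wgt p x * bi (x i) / (Kp x : ℝ) else 0)
                = G p i0 i1 := by
            intro i hi
            simp only [mem_filter, mem_univ, true_and] at hi
            rw [hT i hi.1]
            refine G_eq p ?_ hi.2 hi0v hi1v ?_ hi01
            · simp only [prevF]; omega
            · rw [Ne, Fin.ext_iff]; simp only [prevF]; omega
          rw [Finset.sum_congr rfl hmid, Finset.sum_const, card_mid hn, nsmul_eq_mul,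
            Nat.cast_sub (by omega : 2 ≤ n)]
          push_cast
          ring
  rw [hstruct]
  have hA := agg1 p hn hi0v hi1v hi01
  have hB := agg2 p hn hprevv hlstv
  have hn1 : (n:ℝ) - 1 ≠ 0 := by
    have : (3:ℝ) ≤ (n:ℝ) := by exact_mod_cast hn
    linarith
  rw [eq_div_iff hn1]
  have hqn : (1-p)^n = (1-p)^(n-1) * (1-p) := by
    rw [← pow_succ]
    congr 1
    omega
  rw [hqn]
  linear_combination hA + hB

end S3

/-- Closed form for the expected proportion of successes on trials immediately
following a success (k = 1). -/
theorem stmt3 (n : ℕ) (hn : 2 < n) (p : ℝ) (hp : 0 < p) (hp1 : p < 1) :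
    (∑ x : Fin n → Bool, if (streakSet 1 x).Nonempty then wgt p x * phat 1 x else 0) /
    (∑ x : Fin n → Bool, if (streakSet 1 x).Nonempty then wgt p x else 0)
      = ((p - (1 - (1 - p)^n) / n) * ((n : ℝ) / ((n : ℝ) - 1))) / (1 - (1 - p)^(n-1)) := by

  rw [S3.N_val p hn, S3.D_eq p hn]
  have hn3 : (3:ℝ) ≤ (n:ℝ) := by exact_mod_cast hn
  have hn0 : (n:ℝ) ≠ 0 := by linarith
  have hn1 : (n:ℝ) - 1 ≠ 0 := by linarith
  have hq1 : (1-p)^(n-1) < 1 := by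
    apply pow_lt_one₀ (by linarith) (by linarith)
    omega
  have hd : 1 - (1-p)^(n-1) ≠ 0 := ne_of_gt (by linarith)
  generalize (1-p)^(n-1) = c at *
  generalize (1-p)^n = d at *
  field_simp
  ring
end

section
/- In the setting of the streak selection bias with τ drawn uniformly from I_k(X): for the terminal trial t = n, the conditional probability of success given that trial n is selected equals p, i.e., P(X_n = 1 | τ = n, I_k(X) ≠ ∅) = p. -/
open Finset

lemma streak_update {n k : ℕ} (hn : 1 ≤ n) (x : Fin n → Bool) (b : Bool) :
    streakSet k (Function.update x ⟨n - 1, by omega⟩ b) = streakSet k x := by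
  ext i
  simp only [streakSet, mem_filter, mem_univ, true_and]
  have key : ∀ j : Fin n, j.val < i.val →
      Function.update x ⟨n - 1, by omega⟩ b j = x j := by
    intro j hj
    apply Function.update_of_ne
    intro hje
    have : j.val = n - 1 := by rw [hje]
    have := i.isLt
    omega
  constructor <;> rintro ⟨h1, h2⟩ <;> refine ⟨h1, fun j hj1 hj2 => ?_⟩
  · have := h2 j hj1 hj2; rwa [key j hj2] at this
  · rw [key j hj2]; exact h2 j hj1 hj2

lemma wgt_update {n : ℕ} (p : ℝ) (x : Fin n → Bool) (e : Fin n) (b : Bool) :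
    wgt p (Function.update x e b) =
      (if b then p else 1 - p) * ∏ j ∈ Finset.univ.erase e, (if x j then p else 1 - p) := by
  unfold wgt
  rw [← Finset.mul_prod_erase _ _ (Finset.mem_univ e)]
  congr 1
  · simp
  · apply Finset.prod_congr rfl
    intro j hj
    rw [Function.update_of_ne (Finset.ne_of_mem_erase hj)]

lemma key_term (n k : ℕ) (p : ℝ) (hp : 0 < p)
    (e : Fin n) (x : Fin n → Bool)
    (hS : streakSet k (Function.update x e (!x e)) = streakSet k x) :
    (1 - p) / p * (if e ∈ streakSet k x ∧ x e = true then wgt p x / ((streakSet k x).card : ℝ) else 0)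
    = (if e ∈ streakSet k (Function.update x e (!x e)) ∧ (Function.update x e (!x e)) e = false then
        wgt p (Function.update x e (!x e)) / ((streakSet k (Function.update x e (!x e))).card : ℝ) else 0) := by
  cases hxe : x e
  · simp only [hxe, Bool.false_eq_true, and_false, if_false, mul_zero]
    rw [if_neg]
    rintro ⟨-, hc⟩
    rw [Function.update_self] at hc
    simp [hxe] at hc
  · have hS' : streakSet k (Function.update x e false) = streakSet k x := by
      rw [hxe] at hS; simpa using hS
    simp only [hxe, Bool.not_true, hS', Function.update_self, eq_self_iff_true, and_true]
    by_cases h1 : e ∈ streakSet k x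
    · rw [if_pos h1, if_pos h1]
      have hwx : wgt p x = p * ∏ j ∈ Finset.univ.erase e, (if x j then p else 1 - p) := by
        have := wgt_update p x e true
        rw [Function.update_eq_self_iff.mpr hxe.symm] at this
        simpa using this
      rw [wgt_update p x e false]
      simp only [if_neg Bool.false_ne_true, hwx]
      rw [← mul_div_assoc]
      congr 1
      have hp0 : p ≠ 0 := hp.ne'
      field_simp
    · simp [h1]

/-- At the terminal trial, the conditional probability of success given that it was
the selected trial equals p. -/
theorem stmt9 (n k : ℕ) (hn : 3 ≤ n) (hk : 1 ≤ k) (hk2 : k ≤ n - 2)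
    (p : ℝ) (hp : 0 < p) (hp1 : p < 1) :
    (∑ x : Fin n → Bool,
        if (⟨n - 1, by omega⟩ : Fin n) ∈ streakSet k x ∧ x ⟨n - 1, by omega⟩ = true then
          wgt p x / ((streakSet k x).card : ℝ) else 0) /
    (∑ x : Fin n → Bool,
        if (⟨n - 1, by omega⟩ : Fin n) ∈ streakSet k x then
          wgt p x / ((streakSet k x).card : ℝ) else 0) = p := by
  have hn1 : 1 ≤ n := by omega
  set e : Fin n := ⟨n - 1, by omega⟩ with he
  set N := ∑ x : Fin n → Bool,
      if e ∈ streakSet k x ∧ x e = true then wgt p x / ((streakSet k x).card : ℝ) else 0 with hN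
  set M := ∑ x : Fin n → Bool,
      if e ∈ streakSet k x ∧ x e = false then wgt p x / ((streakSet k x).card : ℝ) else 0 with hM
  have hwgt_pos : ∀ x : Fin n → Bool, 0 < wgt p x := by
    intro x
    apply Finset.prod_pos
    intro i _
    split <;> [exact hp; linarith]
  -- N is positive
  have hNpos : 0 < N := by
    rw [hN]
    apply Finset.sum_pos'
    · intro x _
      split
      · apply div_nonneg (le_of_lt (hwgt_pos x)) (Nat.cast_nonneg _)
      · exact le_refl 0
    · refine ⟨fun _ => true, Finset.mem_univ _, ?_⟩
      have hmem : e ∈ streakSet k (fun _ => true) := by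
        simp only [streakSet, mem_filter, mem_univ, true_and]
        refine ⟨?_, fun j _ _ => trivial⟩
        show k ≤ n - 1
        omega
      rw [if_pos ⟨hmem, rfl⟩]
      apply div_pos (hwgt_pos _)
      exact_mod_cast Finset.card_pos.mpr ⟨e, hmem⟩
  -- denominator = N + M
  have hsplit : (∑ x : Fin n → Bool,
      if e ∈ streakSet k x then wgt p x / ((streakSet k x).card : ℝ) else 0) = N + M := by
    rw [hN, hM, ← Finset.sum_add_distrib]
    apply Finset.sum_congr rfl
    intro x _
    by_cases h1 : e ∈ streakSet k x
    · cases hxe : x e <;> simp [h1, hxe]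
    · simp [h1]
  -- M = (1-p)/p * N via the flip bijection
  have hflip : Function.Bijective (fun x : Fin n → Bool => Function.update x e (!x e)) := by
    apply Function.Involutive.bijective
    intro x
    funext j
    by_cases hj : j = e
    · subst hj; simp [Function.update_self]
    · simp [Function.update_of_ne hj]
  have hMN : M = (1 - p) / p * N := by
    rw [hN, Finset.mul_sum, hM]
    exact (Fintype.sum_bijective _ hflip _ _
      (fun x => key_term n k p hp e x (streak_update hn1 x _))).symm
  have hD : (∑ x : Fin n → Bool,
      if e ∈ streakSet k x then wgt p x / ((streakSet k x).card : ℝ) else 0) = N / p := by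
    rw [hsplit, hMN]
    field_simp
    ring
  rw [hD, div_div_eq_mul_div, mul_comm, mul_div_assoc, div_self hNpos.ne', mul_one]
end

section
/- The estimator P̂_k(X^{(n)}) converges almost surely to p as n → ∞; in particular, the streak selection proportion is a consistent estimator of the conditional probability of success following k consecutive successes. -/
/-!
A run of `K` successes starting at `i` has indicator `∏_{j<K} X_{i+j}`, of mean `p ^ K`. Runs
starting `K + 1` apart read disjoint blocks of the sequence, so along each residue class modulo
`K + 1` these indicators are i.i.d. and the strong law of large numbers applies; as they are
nonnegative, averages along the subsequence `N (K + 1)` control the averages over all `n`.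
The estimator is the ratio of the averages for `K = k + 1` and `K = k`, so it tends to
`p ^ (k + 1) / p ^ k = p`.
-/

open Finset Filter Topology MeasureTheory ProbabilityTheory

theorem sum_range_mul_eq_sum_sum_residue {M : Type*} [AddCommMonoid M] (a : ℕ → M) (N D : ℕ) :
    ∑ i ∈ range (N * D), a i = ∑ r ∈ range D, ∑ t ∈ range N, a (r + t * D) := by
  induction N with
  | zero => simp
  | succ N ih =>
    rw [Nat.succ_mul, sum_range_add, ih, ← sum_add_distrib]
    exact sum_congr rfl fun r _ => by rw [sum_range_succ, add_comm (N * D)]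

theorem tendsto_avg_of_tendsto_avg_residues {a : ℕ → ℝ} (ha : ∀ i, 0 ≤ a i) {D : ℕ} (hD : 0 < D)
    {L : ℝ} (h : ∀ r < D, Tendsto (fun N : ℕ => (∑ t ∈ range N, a (r + t * D)) / N) atTop (𝓝 L)) :
    Tendsto (fun n : ℕ => (∑ i ∈ range n, a i) / n) atTop (𝓝 L) := by
  refine tendsto_div_of_monotone_of_exists_subseq_tendsto_div _ L
    (fun m n hmn => sum_le_sum_of_subset_of_nonneg (range_mono hmn) fun i _ _ => ha i)
    fun c hc => ⟨fun N => N * D, ?_,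
      tendsto_atTop_mono (fun N => Nat.le_mul_of_pos_right N hD) tendsto_id, ?_⟩
  · obtain ⟨N₀, hN₀⟩ := exists_nat_ge (c - 1)⁻¹
    filter_upwards [eventually_ge_atTop N₀] with N hN
    have hc1 : 1 ≤ (c - 1) * N := by
      have := mul_le_mul_of_nonneg_left (hN₀.trans (Nat.cast_le.2 hN)) (sub_pos.2 hc).le
      rwa [mul_inv_cancel₀ (sub_pos.2 hc).ne'] at this
    push_cast
    nlinarith [mul_le_mul_of_nonneg_right hc1 (Nat.cast_nonneg (α := ℝ) D)]
  · have hsum := (tendsto_finsetSum (range D) fun r hr => h r (mem_range.1 hr)).div_const (D : ℝ)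
    rw [sum_const, card_range, nsmul_eq_mul, mul_div_cancel_left₀ _ (by positivity)] at hsum
    refine hsum.congr fun N => ?_
    rw [sum_range_mul_eq_sum_sum_residue, Nat.cast_mul, ← sum_div, div_div]

theorem tendsto_div_of_tendsto_div_natCast {u v : ℕ → ℝ} {A B : ℝ}
    (hu : Tendsto (fun n : ℕ => u n / n) atTop (𝓝 A))
    (hv : Tendsto (fun n : ℕ => v n / n) atTop (𝓝 B)) (hB : B ≠ 0) :
    Tendsto (fun n => u n / v n) atTop (𝓝 (A / B)) := by
  refine (hu.div hv hB).congr' ?_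
  filter_upwards [eventually_ne_atTop 0] with n hn
  exact div_div_div_cancel_right₀ (Nat.cast_ne_zero.2 hn) _ _

-- `runIndicator x K i` is the paper's `Y_{K, i+K-1}`.
def runIndicator (x : ℕ → Bool) (K i : ℕ) : ℝ := ∏ j ∈ range K, if x (i + j) then 1 else 0

theorem runIndicator_nonneg (x : ℕ → Bool) (K i : ℕ) : 0 ≤ runIndicator x K i :=
  prod_nonneg fun _ _ => by split_ifs <;> norm_num

theorem runIndicator_eq_prod_restrict (x : ℕ → Bool) (K i : ℕ) :
    runIndicator x K i =
      ∏ n : Ico i (i + K), if (Ico i (i + K)).restrict x n then (1 : ℝ) else 0 := by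
  calc runIndicator x K i = ∏ n ∈ Ico i (i + K), if x n then (1 : ℝ) else 0 := by
        rw [prod_Ico_eq_prod_range, Nat.add_sub_cancel_left]; rfl
    _ = _ := (prod_coe_sort _ _).symm

def runSet {Ω : Type*} (X : ℕ → Ω → Bool) (K i : ℕ) : Set Ω :=
  ⋂ j ∈ range K, {ω | X (i + j) ω = true}

theorem runIndicator_eq_indicator_runSet {Ω : Type*} (X : ℕ → Ω → Bool) (K i : ℕ) :
    (fun ω => runIndicator (X · ω) K i) = (runSet X K i).indicator 1 := by
  ext ω
  simp only [runIndicator, prod_boole, mem_range, Set.indicator, runSet, Set.mem_iInter,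
    Set.mem_ofPred_eq, Pi.one_apply]

theorem identDistrib_indicator_one {Ω : Type*} [MeasurableSpace Ω] {μ : Measure Ω}
    [IsFiniteMeasure μ] {A B : Set Ω} (hA : MeasurableSet A) (hB : MeasurableSet B)
    (h : μ A = μ B) :
    IdentDistrib (A.indicator (1 : Ω → ℝ)) (B.indicator 1) μ μ := by
  classical
  refine ⟨(measurable_one.indicator hA).aemeasurable,
    (measurable_one.indicator hB).aemeasurable, ?_⟩
  ext s hs
  rw [Measure.map_apply (measurable_one.indicator hA) hs,
    Measure.map_apply (measurable_one.indicator hB) hs]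
  simp only [Pi.one_def, Set.indicator_const_preimage_eq_union]
  split_ifs <;>
    simp [measure_compl hA (measure_ne_top μ A), measure_compl hB (measure_ne_top μ B), h]

section IndependentBits

variable {Ω : Type*} [MeasurableSpace Ω] {μ : Measure Ω} {X : ℕ → Ω → Bool}

theorem measurableSet_runSet (hmeas : ∀ i, Measurable (X i)) (K i : ℕ) :
    MeasurableSet (runSet X K i) :=
  MeasurableSet.biInter (countable_toSet _) fun j _ => hmeas (i + j) (measurableSet_singleton true)

theorem measureReal_runSet (hindep : iIndepFun X μ) {p : ℝ}
    (hdist : ∀ i, (μ {ω | X i ω = true}).toReal = p) (K i : ℕ) :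
    μ.real (runSet X K i) = p ^ K := by
  rw [Measure.real, runSet, (hindep.precomp (add_right_injective i)).meas_biInter (S := range K)
    (s := fun j => {ω | X (i + j) ω = true}) fun j _ => ⟨{true}, measurableSet_singleton true, rfl⟩,
    ENNReal.toReal_prod]
  simp [hdist]

theorem indepFun_runIndicator (hmeas : ∀ i, Measurable (X i)) (hindep : iIndepFun X μ) {K i i' : ℕ}
    (h : i + K ≤ i') :
    IndepFun (fun ω => runIndicator (X · ω) K i) (fun ω => runIndicator (X · ω) K i') μ := by
  have hdisj : Disjoint (Ico i (i + K)) (Ico i' (i' + K)) :=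
    disjoint_left.2 fun n hn hn' => by simp only [mem_Ico] at hn hn'; omega
  simp_rw [runIndicator_eq_prod_restrict]
  exact (hindep.indepFun_finset _ _ hdisj hmeas).comp
    (measurable_of_finite fun v : Ico i (i + K) → Bool => ∏ n, if v n then (1 : ℝ) else 0)
    (measurable_of_finite fun v : Ico i' (i' + K) → Bool => ∏ n, if v n then (1 : ℝ) else 0)

variable [IsProbabilityMeasure μ]

theorem ae_tendsto_avg_runIndicator_residue (hmeas : ∀ i, Measurable (X i))
    (hindep : iIndepFun X μ) {p : ℝ} (hdist : ∀ i, (μ {ω | X i ω = true}).toReal = p) (K r : ℕ) :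
    ∀ᵐ ω ∂μ, Tendsto (fun N : ℕ => (∑ t ∈ range N, runIndicator (X · ω) K (r + t * (K + 1))) / N)
      atTop (𝓝 (p ^ K)) := by
  set Y : ℕ → Ω → ℝ := fun t ω => runIndicator (X · ω) K (r + t * (K + 1))
  have hY : ∀ t, Y t = (runSet X K (r + t * (K + 1))).indicator 1 := fun t =>
    runIndicator_eq_indicator_runSet X K _
  have hindepY : Pairwise fun s t => IndepFun (Y s) (Y t) μ := by
    have hspaced : ∀ {s t : ℕ}, s < t → r + s * (K + 1) + K ≤ r + t * (K + 1) := fun hst => by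
      have := Nat.mul_le_mul_right (K + 1) hst
      rw [Nat.succ_mul] at this
      omega
    intro s t hst
    rcases hst.lt_or_gt with hst | hst
    · exact indepFun_runIndicator hmeas hindep (hspaced hst)
    · exact (indepFun_runIndicator hmeas hindep (hspaced hst)).symm
  have hident : ∀ t, IdentDistrib (Y t) (Y 0) μ μ := fun t => by
    rw [hY, hY]
    exact identDistrib_indicator_one (measurableSet_runSet hmeas _ _)
      (measurableSet_runSet hmeas _ _)
      (by rw [← measureReal_eq_measureReal_iff, measureReal_runSet hindep hdist,
        measureReal_runSet hindep hdist])
  have hmean : μ[Y 0] = p ^ K := by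
    rw [hY, integral_indicator_one (measurableSet_runSet hmeas _ _),
      measureReal_runSet hindep hdist]
  have hint : Integrable (Y 0) μ := by
    rw [hY]; exact (integrable_const 1).indicator (measurableSet_runSet hmeas _ _)
  simpa only [hmean] using strong_law_ae_real Y hint hindepY hident

theorem ae_tendsto_avg_runIndicator (hmeas : ∀ i, Measurable (X i)) (hindep : iIndepFun X μ)
    {p : ℝ} (hdist : ∀ i, (μ {ω | X i ω = true}).toReal = p) (K : ℕ) :
    ∀ᵐ ω ∂μ, Tendsto (fun n : ℕ => (∑ i ∈ range n, runIndicator (X · ω) K i) / n) atTop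
      (𝓝 (p ^ K)) := by
  filter_upwards [ae_all_iff.2 (ae_tendsto_avg_runIndicator_residue hmeas hindep hdist K)]
    with ω hω
  exact tendsto_avg_of_tendsto_avg_residues (fun i => runIndicator_nonneg _ K i) K.succ_pos
    fun r _ => hω r

end IndependentBits

theorem stmt11_general {Ω : Type*} [MeasurableSpace Ω] (μ : Measure Ω) [IsProbabilityMeasure μ]
    (p : ℝ) (hp : 0 < p) (X : ℕ → Ω → Bool) (hmeas : ∀ i, Measurable (X i))
    (hindep : ProbabilityTheory.iIndepFun X μ)
    (hdist : ∀ i, (μ {ω | X i ω = true}).toReal = p) (k : ℕ) :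
    ∀ᵐ ω ∂μ, Tendsto (fun n : ℕ =>
      (∑ i ∈ Finset.range (n - k), ∏ j ∈ Finset.range (k + 1),
        (if X (i + j) ω then (1:ℝ) else 0)) /
      (∑ i ∈ Finset.range (n - k), ∏ j ∈ Finset.range k,
        (if X (i + j) ω then (1:ℝ) else 0)))
      atTop (nhds p) := by
  filter_upwards [ae_tendsto_avg_runIndicator hmeas hindep hdist (k + 1),
    ae_tendsto_avg_runIndicator hmeas hindep hdist k] with ω hnum hden
  have hratio := tendsto_div_of_tendsto_div_natCast hnum hden (pow_ne_zero k hp.ne')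
  rw [pow_succ, mul_div_cancel_left₀ p (pow_ne_zero k hp.ne')] at hratio
  exact hratio.comp (tendsto_sub_atTop_nat k)

/-- Consistency: the streak-selection proportion converges almost surely to p. -/
theorem stmt11 {Ω : Type*} [MeasurableSpace Ω] (μ : Measure Ω) [IsProbabilityMeasure μ]
    (p : ℝ) (hp : 0 < p) (hp1 : p < 1) (X : ℕ → Ω → Bool) (hmeas : ∀ i, Measurable (X i))
    (hindep : ProbabilityTheory.iIndepFun X μ)
    (hdist : ∀ i, (μ {ω | X i ω = true}).toReal = p) (k : ℕ) (hk : 1 ≤ k) :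
    ∀ᵐ ω ∂μ, Tendsto (fun n : ℕ =>
      (∑ i ∈ Finset.range (n - k), ∏ j ∈ Finset.range (k + 1),
        (if X (i + j) ω then (1:ℝ) else 0)) /
      (∑ i ∈ Finset.range (n - k), ∏ j ∈ Finset.range k,
        (if X (i + j) ω then (1:ℝ) else 0)))
      atTop (nhds p) :=
  stmt11_general μ p hp X hmeas hindep hdist k
end

section
/- For an i.i.d. Bernoulli sequence of length n conditioned on exactly n1 successes (with 2 ≤ n1 ≤ n), a uniformly random element τ of I_1(X) = {i ≥ 2 : X_{i−1} = 1} is equally likely to be each of the positions 2,…,n: P(τ = t | N_1(X) = n1) = 1/(n−1) for all t ∈ {2,…,n}. -/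
open Finset

lemma mem_streakSet_one {n : ℕ} (x : Fin n → Bool) (i : Fin n) (hi : 1 ≤ i.val) :
    i ∈ streakSet 1 x ↔ x ⟨i.val - 1, lt_of_le_of_lt (Nat.sub_le _ _) i.isLt⟩ = true := by
  simp only [streakSet, Finset.mem_filter, Finset.mem_univ, true_and]
  constructor
  · rintro ⟨-, h⟩
    exact h _ le_rfl (Nat.sub_lt (by omega) one_pos)
  · intro h
    refine ⟨hi, fun j h1 h2 => ?_⟩
    have hj : j = ⟨i.val - 1, lt_of_le_of_lt (Nat.sub_le _ _) i.isLt⟩ :=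
      Fin.ext (show (j : ℕ) = i.val - 1 by omega)
    rwa [hj]

lemma streakSet_one_card {n : ℕ} (hn : 2 ≤ n) (x : Fin n → Bool) :
    (streakSet 1 x).card =
      ((Finset.univ.filter (fun j : Fin n => x j = true)).erase ⟨n - 1, by omega⟩).card := by
  refine Finset.card_bij'
    (fun i hi => (⟨i.val - 1, lt_of_le_of_lt (Nat.sub_le _ _) i.isLt⟩ : Fin n))
    (fun j hj => (⟨j.val + 1, ?_⟩ : Fin n)) ?_ ?_ ?_ ?_
  · simp only [Finset.mem_erase, Finset.mem_filter] at hj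
    have h1 : j.val ≠ n - 1 := fun h => hj.1 (Fin.ext h)
    have := j.isLt; omega
  · intro i hi
    have h1 : 1 ≤ i.val := by
      simpa [streakSet] using (Finset.mem_filter.mp hi).2.1
    have h2 := (mem_streakSet_one x i h1).mp hi
    simp only [Finset.mem_erase, Finset.mem_filter, Finset.mem_univ, true_and]
    refine ⟨fun h => ?_, h2⟩
    have := i.isLt
    have h3 : i.val - 1 = n - 1 := congrArg Fin.val h
    omega
  · intro j hj
    simp only [Finset.mem_erase, Finset.mem_filter, Finset.mem_univ, true_and] at hj
    have h1 : (1 : ℕ) ≤ j.val + 1 := by omega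
    rw [mem_streakSet_one _ _ h1]
    simpa using hj.2
  · intro i hi
    have h1 : 1 ≤ i.val := by
      simpa [streakSet] using (Finset.mem_filter.mp hi).2.1
    exact Fin.ext (show i.val - 1 + 1 = i.val by omega)
  · intro j hj
    exact Fin.ext (show j.val + 1 - 1 = j.val by omega)

def boolEquiv (n : ℕ) : Finset (Fin n) ≃ (Fin n → Bool) where
  toFun s := fun i => decide (i ∈ s)
  invFun x := Finset.univ.filter (fun i => x i = true)
  left_inv s := by ext i; simp
  right_inv x := by funext i; simp

lemma count_mem_mem {α : Type*} [DecidableEq α] [Fintype α] (a b : α) (hab : a ≠ b) (k : ℕ) :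
    ((Finset.univ : Finset (Finset α)).filter
      (fun s => s.card = k + 2 ∧ a ∈ s ∧ b ∈ s)).card = (Fintype.card α - 2).choose k := by
  have hcard : (((Finset.univ : Finset α).erase a).erase b).card = Fintype.card α - 2 := by
    rw [Finset.card_erase_of_mem (by simp [hab.symm]), Finset.card_erase_of_mem (by simp)]
    simp only [Finset.card_erase_of_mem, Finset.card_univ]
    omega
  rw [← hcard, ← Finset.card_powersetCard]
  refine Finset.card_bij' (fun s _ => (s.erase a).erase b)
    (fun t _ => insert a (insert b t)) ?_ ?_ ?_ ?_
  · intro s hs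
    simp only [Finset.mem_filter, Finset.mem_univ, true_and] at hs
    rw [Finset.mem_powersetCard]
    constructor
    · intro x hx
      simp only [Finset.mem_erase] at hx ⊢
      exact ⟨hx.1, hx.2.1, Finset.mem_univ _⟩
    · rw [Finset.card_erase_of_mem (Finset.mem_erase.mpr ⟨hab.symm, hs.2.2⟩),
        Finset.card_erase_of_mem hs.2.1, hs.1]
      omega
  · intro t ht
    rw [Finset.mem_powersetCard] at ht
    have hbt : b ∉ t := fun h => by have := ht.1 h; simp at this
    have hat : a ∉ insert b t := by
      simp only [Finset.mem_insert]
      rintro (rfl | h)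
      · exact hab rfl
      · have := ht.1 h; simp at this
    simp only [Finset.mem_filter, Finset.mem_univ, true_and]
    refine ⟨?_, Finset.mem_insert_self _ _, Finset.mem_insert_of_mem (Finset.mem_insert_self _ _)⟩
    rw [Finset.card_insert_of_notMem hat, Finset.card_insert_of_notMem hbt, ht.2]
  · intro s hs
    simp only [Finset.mem_filter, Finset.mem_univ, true_and] at hs
    show insert a (insert b ((s.erase a).erase b)) = s
    rw [Finset.insert_erase (Finset.mem_erase.mpr ⟨hab.symm, hs.2.2⟩), Finset.insert_erase hs.2.1]
  · intro t ht
    rw [Finset.mem_powersetCard] at ht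
    have hbt : b ∉ t := fun h => by have := ht.1 h; simp at this
    have hat : a ∉ insert b t := by
      simp only [Finset.mem_insert]
      rintro (rfl | h)
      · exact hab rfl
      · have := ht.1 h; simp at this
    show ((insert a (insert b t)).erase a).erase b = t
    rw [Finset.erase_insert hat, Finset.erase_insert hbt]

lemma count_mem_not {α : Type*} [DecidableEq α] [Fintype α] (a b : α) (hab : a ≠ b) (k : ℕ) :
    ((Finset.univ : Finset (Finset α)).filter
      (fun s => s.card = k + 1 ∧ a ∈ s ∧ b ∉ s)).card = (Fintype.card α - 2).choose k := by
  have hcard : (((Finset.univ : Finset α).erase a).erase b).card = Fintype.card α - 2 := by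
    rw [Finset.card_erase_of_mem (by simp [hab.symm]), Finset.card_erase_of_mem (by simp)]
    simp only [Finset.card_erase_of_mem, Finset.card_univ]
    omega
  rw [← hcard, ← Finset.card_powersetCard]
  refine Finset.card_bij' (fun s _ => s.erase a) (fun t _ => insert a t) ?_ ?_ ?_ ?_
  · intro s hs
    simp only [Finset.mem_filter, Finset.mem_univ, true_and] at hs
    rw [Finset.mem_powersetCard]
    constructor
    · intro x hx
      simp only [Finset.mem_erase] at hx ⊢
      refine ⟨fun h => hs.2.2 (h ▸ hx.2), hx.1, Finset.mem_univ _⟩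
    · rw [Finset.card_erase_of_mem hs.2.1, hs.1]
      omega
  · intro t ht
    rw [Finset.mem_powersetCard] at ht
    have hat : a ∉ t := fun h => by have := ht.1 h; simp at this
    simp only [Finset.mem_filter, Finset.mem_univ, true_and, Finset.mem_insert]
    refine ⟨?_, by simp, ?_⟩
    · rw [Finset.card_insert_of_notMem hat, ht.2]
    · rintro (rfl | h)
      · exact hab rfl
      · have := ht.1 h; simp at this
  · intro s hs
    simp only [Finset.mem_filter, Finset.mem_univ, true_and] at hs
    show insert a (s.erase a) = s
    rw [Finset.insert_erase hs.2.1]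
  · intro t ht
    rw [Finset.mem_powersetCard] at ht
    have hat : a ∉ t := fun h => by have := ht.1 h; simp at this
    show (insert a t).erase a = t
    rw [Finset.erase_insert hat]

/-- For a uniformly random sequence with exactly n1 ones (n1 ≥ 2), a trial drawn
uniformly from the trials following a success is uniform on positions 2,...,n. -/
theorem stmt12 (n n1 : ℕ) (hn : 2 ≤ n) (h1 : 2 ≤ n1) (h2 : n1 ≤ n)
    (t : Fin n) (ht : 1 ≤ t.val) :
    (∑ x : Fin n → Bool,
        if ones x = n1 ∧ t ∈ streakSet 1 x then (1:ℝ) / ((streakSet 1 x).card : ℝ) else 0) /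
      (Nat.choose n n1 : ℝ) = 1 / ((n : ℝ) - 1) := by
  obtain ⟨m, rfl⟩ : ∃ m, n1 = m + 2 := ⟨n1 - 2, by omega⟩
  have hlast : n - 1 < n := by omega
  set lst : Fin n := ⟨n - 1, hlast⟩ with hlst
  have hptlt : t.val - 1 < n := by omega
  set pt : Fin n := ⟨t.val - 1, hptlt⟩ with hpt
  have hptne : pt ≠ lst := by
    have := t.isLt
    have : pt.val ≠ lst.val := by simp only [hpt, hlst]; omega
    exact fun h => this (congrArg Fin.val h)
  -- transfer the sum to finsets
  have hsum : (∑ x : Fin n → Bool,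
        if ones x = m + 2 ∧ t ∈ streakSet 1 x then (1:ℝ) / ((streakSet 1 x).card : ℝ) else 0)
      = ∑ s : Finset (Fin n),
        ((if s.card = m + 2 ∧ pt ∈ s ∧ lst ∈ s then (1:ℝ) / ((m : ℝ) + 1) else 0)
        + (if s.card = m + 2 ∧ pt ∈ s ∧ lst ∉ s then (1:ℝ) / ((m : ℝ) + 2) else 0)) := by
    rw [← Fintype.sum_equiv (boolEquiv n) _ _ (fun s => rfl)]
    refine Finset.sum_congr rfl (fun s _ => ?_)
    have hmem : ∀ i : Fin n, boolEquiv n s i = true ↔ i ∈ s := by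
      intro i; simp [boolEquiv]
    have hones : ones (boolEquiv n s) = s.card := by
      unfold ones
      congr 1
      ext i
      simp [hmem]
    have hcard : (streakSet 1 (boolEquiv n s)).card = (s.erase lst).card := by
      rw [streakSet_one_card hn]
      congr 2
      ext i
      simp [hmem]
    have htmem : t ∈ streakSet 1 (boolEquiv n s) ↔ pt ∈ s := by
      rw [mem_streakSet_one _ _ ht, hmem]
    by_cases hc : s.card = m + 2 ∧ pt ∈ s
    · by_cases hl : lst ∈ s
      · rw [if_pos ⟨hones.trans hc.1, htmem.mpr hc.2⟩, if_pos ⟨hc.1, hc.2, hl⟩,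
          if_neg (fun h => h.2.2 hl), add_zero, hcard,
          Finset.card_erase_of_mem hl, hc.1]
        norm_num
      · rw [if_pos ⟨hones.trans hc.1, htmem.mpr hc.2⟩, if_neg (fun h => hl h.2.2),
          if_pos ⟨hc.1, hc.2, hl⟩, zero_add, hcard,
          Finset.erase_eq_of_notMem hl, hc.1]
        norm_num
    · rw [if_neg (fun h => hc ⟨hones.symm.trans h.1, htmem.mp h.2⟩),
        if_neg (fun h => hc ⟨h.1, h.2.1⟩), if_neg (fun h => hc ⟨h.1, h.2.1⟩), add_zero]
  rw [hsum, Finset.sum_add_distrib,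
    Finset.sum_ite, Finset.sum_const, Finset.sum_const_zero, add_zero,
    Finset.sum_ite, Finset.sum_const, Finset.sum_const_zero, add_zero]
  have hA := count_mem_mem pt lst hptne m
  have hB := count_mem_not pt lst hptne (m + 1)
  rw [Fintype.card_fin] at hA hB
  rw [hA, hB]
  -- arithmetic
  obtain ⟨p, rfl⟩ : ∃ p, n = p + 2 := ⟨n - 2, by omega⟩
  have hd2 : p + 2 - 2 = p := by omega
  rw [hd2]
  have f1 : (p + 1) * p.choose m = (p + 1).choose (m + 1) * (m + 1) :=
    Nat.add_one_mul_choose_eq p m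
  have f2 : (p + 1) * p.choose (m + 1) = (p + 1).choose (m + 2) * (m + 2) :=
    Nat.add_one_mul_choose_eq p (m + 1)
  have f3 : (p + 2).choose (m + 2) = (p + 1).choose (m + 1) + (p + 1).choose (m + 2) :=
    Nat.choose_succ_succ _ _
  have hpos : 0 < (p + 2).choose (m + 2) := Nat.choose_pos (by omega)
  have c1 : ((p + 1).choose (m + 1) : ℝ) ≥ 0 := by positivity
  push_cast [f3]
  rw [nsmul_eq_mul, nsmul_eq_mul]
  have F1 : ((p:ℝ) + 1) * (p.choose m : ℝ) = ((p + 1).choose (m + 1) : ℝ) * ((m:ℝ) + 1) := by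
    exact_mod_cast f1
  have F2 : ((p:ℝ) + 1) * (p.choose (m + 1) : ℝ) = ((p + 1).choose (m + 2) : ℝ) * ((m:ℝ) + 2) := by
    exact_mod_cast f2
  have hC : (0:ℝ) < ((p + 1).choose (m + 1) : ℝ) + ((p + 1).choose (m + 2) : ℝ) := by
    have := Nat.choose_pos (show m + 1 ≤ p + 1 by omega)
    have : (0:ℝ) < ((p + 1).choose (m + 1) : ℝ) := by exact_mod_cast this
    positivity
  have hm1 : ((m:ℝ) + 1) ≠ 0 := by positivity
  have hm2 : ((m:ℝ) + 2) ≠ 0 := by positivity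
  have hp1 : ((p:ℝ) + 2 - 1) ≠ 0 := by
    have : (0:ℝ) ≤ (p:ℝ) := Nat.cast_nonneg p
    intro h; nlinarith
  field_simp
  linear_combination ((m:ℝ) + 2) * F1 + ((m:ℝ) + 1) * F2
end

section
/- For p = 1/2, the magnitude of the k=1 streak selection bias, b(n) = 1/2 − E[P̂_1 | I_1 ≠ ∅], is strictly positive for all n ≥ 3 and tends to 0 as n → ∞. -/
/-!
Clearing denominators, `b(n) = (1/2 - n 2⁻ⁿ) / ((n - 1)(1 - 2⁻⁽ⁿ⁻¹⁾))`. The numerator is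
positive since `2n < 2ⁿ` for `n ≥ 3` and tends to `1/2`, while the denominator is positive and
grows like `n`, so `b(n)` is positive and tends to `0`.
-/

open Filter

/-- The closed-form expected proportion for p = 1/2 and k = 1. -/
noncomputable def expProp (n : ℕ) : ℝ :=
  (((1:ℝ)/2 - (1 - (1/2) ^ n) / n) * ((n : ℝ) / ((n : ℝ) - 1))) / (1 - (1/2) ^ (n - 1))

lemma one_half_sub_expProp {n : ℕ} (hn : 2 ≤ n) :
    1 / 2 - expProp n =
      (1 / 2 - n * (1 / 2 : ℝ) ^ n) / ((n - 1) * (1 - (1 / 2 : ℝ) ^ (n - 1))) := by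
  obtain ⟨m, rfl⟩ : ∃ m, n = m + 1 := ⟨n - 1, by omega⟩
  have hm : (1 : ℝ) ≤ m := by exact_mod_cast (by omega : 1 ≤ m)
  have hpow : (1 / 2 : ℝ) ^ m < 1 := pow_lt_one₀ (by norm_num) (by norm_num) (by omega)
  have hm₁ : (m : ℝ) + 1 - 1 ≠ 0 := by linarith
  have hpow₁ : (1 : ℝ) - (1 / 2) ^ m ≠ 0 := by linarith
  unfold expProp
  rw [Nat.add_sub_cancel, pow_succ]
  push_cast
  field_simp
  ring

lemma two_mul_lt_two_pow {n : ℕ} (hn : 3 ≤ n) : 2 * n < 2 ^ n := by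
  induction n, hn using Nat.le_induction with
  | base => norm_num
  | succ k hk ih => rw [pow_succ]; omega

lemma natCast_mul_half_pow_lt_half {n : ℕ} (hn : 3 ≤ n) : (n : ℝ) * (1 / 2) ^ n < 1 / 2 := by
  have h : (2 : ℝ) * n < 2 ^ n := by exact_mod_cast two_mul_lt_two_pow hn
  rw [one_div, inv_pow, ← div_eq_mul_inv, div_lt_iff₀ (by positivity)]
  linarith

lemma streakBias_denominator_pos {n : ℕ} (hn : 2 ≤ n) :
    0 < ((n : ℝ) - 1) * (1 - (1 / 2 : ℝ) ^ (n - 1)) := by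
  have hn' : (2 : ℝ) ≤ n := by exact_mod_cast hn
  have hpow : (1 / 2 : ℝ) ^ (n - 1) < 1 := pow_lt_one₀ (by norm_num) (by norm_num) (by omega)
  exact mul_pos (by linarith) (by linarith)

lemma tendsto_streakBias_denominator :
    Tendsto (fun n : ℕ => ((n : ℝ) - 1) * (1 - (1 / 2 : ℝ) ^ (n - 1))) atTop atTop := by
  have hlin : Tendsto (fun n : ℕ => (n : ℝ) - 1) atTop atTop :=
    tendsto_atTop_add_const_right _ _ tendsto_natCast_atTop_atTop
  have hgeom : Tendsto (fun n : ℕ => 1 - (1 / 2 : ℝ) ^ (n - 1)) atTop (nhds (1 - 0)) :=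
    ((tendsto_pow_atTop_nhds_zero_of_lt_one (by norm_num) (by norm_num)).comp
      (tendsto_sub_atTop_nat 1)).const_sub 1
  exact hlin.atTop_mul_pos (by norm_num) hgeom

/-- The magnitude of the k = 1 streak selection bias for a fair coin is strictly
positive for all n ≥ 3 and vanishes as n → ∞. -/
theorem stmt19 :
    (∀ n : ℕ, 3 ≤ n → 0 < 1 / 2 - expProp n) ∧
    Tendsto (fun n : ℕ => 1 / 2 - expProp n) atTop (nhds 0) := by
  refine ⟨fun n hn => ?_, ?_⟩
  · rw [one_half_sub_expProp (by omega)]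
    exact div_pos (sub_pos.2 (natCast_mul_half_pow_lt_half hn))
      (streakBias_denominator_pos (by omega))
  · have hnum : Tendsto (fun n : ℕ => 1 / 2 - n * (1 / 2 : ℝ) ^ n) atTop (nhds (1 / 2 - 0)) :=
      (tendsto_self_mul_const_pow_of_lt_one (by norm_num) (by norm_num)).const_sub _
    refine (hnum.div_atTop tendsto_streakBias_denominator).congr' ?_
    filter_upwards [eventually_ge_atTop 2] with n hn
    exact (one_half_sub_expProp hn).symm
end
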